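/- arXiv:1405.5776 — 7 statements merged into one kernel-verified Lean document; each statement's English description precedes it below -/
import Mathlib

section
/- Let K be a number field and O an order in K. A nonzero prime ideal p of O is regular (i.e., the localization O_p is integrally closed) if and only if p is invertible as a fractional O-ideal. -/
/-!
Localizing at `p` reduces regularity to a statement about the one-dimensional Noetherian local
domain `O_p`: it is integrally closed iff it is a discrete valuation ring iff its maximal ideal
`p O_p` is principal. If `p J = O`, pick `a ∈ p`, `b ∈ J` with `ab ∉ p`; then every `x ∈ p`
satisfies `x · ab = a · xb` with `xb ∈ O`, so `a` generates `p O_p`. Conversely, if `p O_p = (y)`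
with `y ∈ p`, finite generation of `p` gives one `s ∉ p` with `s p ⊆ (y)`; then `s / y ∈ p⁻¹`, so
the ideal `p p⁻¹` of `O` contains both `p` and `s ∉ p`, and maximality of `p` forces `p p⁻¹ = O`.
-/

open NumberField
open scoped nonZeroDivisors

set_option maxHeartbeats 1000000
set_option synthInstance.maxHeartbeats 400000

/-- An order in a number field `K`: a subring (`ℤ`-subalgebra) of `K` consisting of elements
integral over `ℤ` and spanning `K` over `ℚ` (equivalently, having an integral basis of length
`[K : ℚ]`). -/
structure IsOrder {K : Type*} [Field K] [NumberField K] (O : Subalgebra ℤ K) : Prop where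
  le : O ≤ integralClosure ℤ K
  spans : Submodule.span ℚ (O : Set K) = ⊤

/-- The conductor `f = {a ∈ O_K : a·O_K ⊆ O}` of an order `O`, as an ideal of `O`. -/
def condO {K : Type*} [Field K] [NumberField K] (O : Subalgebra ℤ K) : Ideal O where
  carrier := {x | ∀ b : 𝓞 K, (x : K) * (b : K) ∈ O}
  add_mem' := by
    intro x y hx hy b
    have := O.add_mem (hx b) (hy b)
    push_cast
    rw [add_mul]
    exact_mod_cast this
  zero_mem' := by intro b; push_cast; rw [zero_mul]; exact O.zero_mem
  smul_mem' := by
    intro c x hx b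
    have hc : (c : K) ∈ O := c.2
    have := O.mul_mem hc (hx b)
    simp only [smul_eq_mul]
    push_cast
    rw [mul_assoc]
    exact_mod_cast this

/-- The conductor `f = {a ∈ O_K : a·O_K ⊆ O}` of an order `O`, as an ideal of `O_K`. -/
def condOK {K : Type*} [Field K] [NumberField K] (O : Subalgebra ℤ K) : Ideal (𝓞 K) where
  carrier := {a | ∀ b : 𝓞 K, (a : K) * (b : K) ∈ O}
  add_mem' := by
    intro x y hx hy b
    have := O.add_mem (hx b) (hy b)
    push_cast
    rw [add_mul]
    exact this
  zero_mem' := by intro b; push_cast; rw [zero_mul]; exact O.zero_mem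
  smul_mem' := by
    intro c x hx b
    have := hx (c * b)
    simp only [smul_eq_mul]
    push_cast at this ⊢
    have h2 : (c : K) * ((x : K) * (b : K)) = (x : K) * ((c : K) * (b : K)) := by ring
    rw [mul_assoc, h2]
    exact this

open IsLocalRing

namespace IsLocalization

variable {R : Type*} [CommSemiring R] {S : Type*} [CommSemiring S] [Algebra R S]

theorem exists_mem_mul_mem_of_map_le_map (M : Submonoid R) [IsLocalization M S] {I J : Ideal R}
    (hI : I.FG) (h : I.map (algebraMap R S) ≤ J.map (algebraMap R S)) :
    ∃ m ∈ M, ∀ x ∈ I, m * x ∈ J := by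
  induction I, hI using Submodule.fg_induction with
  | singleton x =>
    obtain ⟨m, hm, hmx⟩ := (algebraMap_mem_map_algebraMap_iff M S J x).mp
      (h (Ideal.mem_map_of_mem _ (Ideal.mem_span_singleton_self x)))
    refine ⟨m, hm, fun y hy => ?_⟩
    obtain ⟨a, rfl⟩ := Ideal.mem_span_singleton'.mp hy
    simpa [mul_left_comm m a x] using J.mul_mem_left a hmx
  | sup I₁ I₂ _ _ ih₁ ih₂ =>
    rw [Ideal.map_sup, sup_le_iff] at h
    obtain ⟨m₁, hm₁, h₁⟩ := ih₁ h.1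
    obtain ⟨m₂, hm₂, h₂⟩ := ih₂ h.2
    refine ⟨m₁ * m₂, M.mul_mem hm₁ hm₂, fun x hx => ?_⟩
    obtain ⟨x₁, hx₁, x₂, hx₂, rfl⟩ := Submodule.mem_sup.mp hx
    rw [mul_add, mul_right_comm, mul_assoc m₁ m₂ x₂]
    exact J.add_mem (J.mul_mem_right _ (h₁ x₁ hx₁)) (J.mul_mem_left _ (h₂ x₂ hx₂))

theorem exists_mem_map_eq_map_span_singleton (M : Submonoid R) [IsLocalization M S] {I : Ideal R}
    (h : (I.map (algebraMap R S)).IsPrincipal) :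
    ∃ y ∈ I, I.map (algebraMap R S) = (Ideal.span {y}).map (algebraMap R S) := by
  obtain ⟨t, ht⟩ := h
  obtain ⟨⟨⟨y, hy⟩, m⟩, hym⟩ := (mem_map_algebraMap_iff M S).mp
    (ht ▸ Ideal.mem_span_singleton_self t : t ∈ I.map (algebraMap R S))
  refine ⟨y, hy, ?_⟩
  rw [Ideal.map_span, Set.image_singleton, ht, ← hym]
  exact (Ideal.span_singleton_mul_right_unit (map_units S m) t).symm

end IsLocalization

theorem IsLocalRing.isIntegrallyClosed_iff_isPrincipal_maximalIdeal (R : Type*) [CommRing R]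
    [IsDomain R] [IsLocalRing R] [IsNoetherianRing R] [Ring.DimensionLEOne R] :
    IsIntegrallyClosed R ↔ (maximalIdeal R).IsPrincipal := by
  refine Iff.trans ?_ ((tfae_of_isNoetherianRing_of_isLocalRing_of_isDomain R).out 2 4)
  exact ⟨fun _ => { }, fun _ => inferInstance⟩

theorem Localization.AtPrime.isIntegrallyClosed_iff_isPrincipal_maximalIdeal {A : Type*}
    [CommRing A] [IsDomain A] [IsNoetherianRing A] [Ring.DimensionLEOne A] (p : Ideal A)
    [p.IsPrime] :
    IsIntegrallyClosed (Localization.AtPrime p) ↔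
      (maximalIdeal (Localization.AtPrime p)).IsPrincipal :=
  have : IsNoetherianRing (Localization.AtPrime p) :=
    IsLocalization.isNoetherianRing p.primeCompl _ inferInstance
  have := Ring.DimensionLEOne.localization (Localization.AtPrime p) p.primeCompl_le_nonZeroDivisors
  IsLocalRing.isIntegrallyClosed_iff_isPrincipal_maximalIdeal _

namespace FractionalIdeal

variable {A K : Type*} [CommRing A] [Field K] [Algebra A K] [IsFractionRing A K]

theorem isPrincipal_maximalIdeal_of_coeIdeal_mul_eq_one {p : Ideal A} [p.IsPrime]
    {J : FractionalIdeal A⁰ K} (hJ : (p : FractionalIdeal A⁰ K) * J = 1) :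
    (maximalIdeal (Localization.AtPrime p)).IsPrincipal := by
  have hJp : ¬(p : FractionalIdeal A⁰ K) * J ≤ p := by
    rw [hJ, ← coeIdeal_top, coeIdeal_le_coeIdeal, top_le_iff]
    exact Ideal.IsPrime.ne_top ‹_›
  obtain ⟨_, haK, b, hb, hab⟩ :
      ∃ a ∈ (p : FractionalIdeal A⁰ K), ∃ b ∈ J, a * b ∉ (p : FractionalIdeal A⁰ K) := by
    simpa [mul_le] using hJp
  obtain ⟨a, ha, rfl⟩ := (mem_coeIdeal _).mp haK
  obtain ⟨r, hr⟩ := (mem_one_iff _).mp (hJ ▸ mul_mem_mul haK hb)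
  have hrp : r ∉ p := fun hrp => hab ((mem_coeIdeal _).mpr ⟨r, hrp, hr⟩)
  suffices p.map (algebraMap A _) = (Ideal.span {a}).map (algebraMap A (Localization.AtPrime p)) by
    rw [← Localization.AtPrime.map_eq_maximalIdeal, this, Ideal.map_span, Set.image_singleton]
    exact ⟨⟨_, rfl⟩⟩
  refine le_antisymm (Ideal.map_le_iff_le_comap.mpr fun x hx => ?_)
    (Ideal.map_mono ((Ideal.span_singleton_le_iff_mem p).mpr ha))
  refine (IsLocalization.algebraMap_mem_map_algebraMap_iff p.primeCompl _ _ x).mpr ⟨r, hrp, ?_⟩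
  obtain ⟨c, hc⟩ := (mem_one_iff _).mp (hJ ▸ mul_mem_mul ((mem_coeIdeal _).mpr ⟨x, hx, rfl⟩) hb)
  refine Ideal.mem_span_singleton'.mpr ⟨c, IsFractionRing.injective A K ?_⟩
  simp only [map_mul, hc, hr]
  ring

variable [IsDomain A]

theorem coeIdeal_mul_inv_eq_one_of_mul_mem_span_singleton {p : Ideal A} (hp : p.IsMaximal)
    (hp0 : p ≠ ⊥) {y s : A} (hy : y ∈ p) (hs : s ∉ p) (hsy : ∀ x ∈ p, s * x ∈ Ideal.span {y}) :
    (p : FractionalIdeal A⁰ K) * (p : FractionalIdeal A⁰ K)⁻¹ = 1 := by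
  have hy0 : algebraMap A K y ≠ 0 := by
    refine (map_ne_zero_iff _ (IsFractionRing.injective A K)).mpr fun hy0 => hp0 ?_
    refine (Submodule.eq_bot_iff p).mpr fun x hx => ?_
    have hsx := hsy x hx
    rw [hy0, Ideal.span_singleton_eq_bot.mpr rfl, Ideal.mem_bot] at hsx
    exact (mul_eq_zero.mp hsx).resolve_left fun h => hs (h ▸ p.zero_mem)
  have hg : algebraMap A K s / algebraMap A K y ∈ (p : FractionalIdeal A⁰ K)⁻¹ := by
    refine (mem_inv_iff (coeIdeal_ne_zero.mpr hp0)).mpr fun _ hz => ?_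
    obtain ⟨x, hx, rfl⟩ := (mem_coeIdeal _).mp hz
    obtain ⟨c, hc⟩ := Ideal.mem_span_singleton'.mp (hsy x hx)
    refine (mem_one_iff _).mpr ⟨c, ?_⟩
    rw [div_mul_eq_mul_div, eq_div_iff hy0, ← map_mul, ← map_mul, hc]
  obtain ⟨I, hI⟩ :=
    le_one_iff_exists_coeIdeal.mp (mul_one_div_le_one (I := (p : FractionalIdeal A⁰ K)))
  have hpI : p ≤ I := (coeIdeal_le_coeIdeal K).mp (hI ▸ coe_ideal_le_self_mul_inv K p)
  have hsI : s ∈ I := by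
    have hsK : algebraMap A K s ∈ (I : FractionalIdeal A⁰ K) := by
      rw [hI, ← mul_div_cancel₀ (algebraMap A K s) hy0]
      exact mul_mem_mul ((mem_coeIdeal _).mpr ⟨y, hy, rfl⟩) hg
    obtain ⟨s', hs', hss'⟩ := (mem_coeIdeal _).mp hsK
    rwa [← IsFractionRing.injective A K hss']
  have hI1 : I = ⊤ := by_contra fun hI1 => hs (hp.eq_of_le hI1 hpI ▸ hsI)
  rw [inv_eq, ← hI, hI1, coeIdeal_top]

theorem coeIdeal_mul_inv_eq_one_iff_isPrincipal_maximalIdeal [IsNoetherianRing A] {p : Ideal A}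
    [hp : p.IsMaximal] (hp0 : p ≠ ⊥) :
    (p : FractionalIdeal A⁰ K) * (p : FractionalIdeal A⁰ K)⁻¹ = 1 ↔
      (maximalIdeal (Localization.AtPrime p)).IsPrincipal := by
  refine ⟨isPrincipal_maximalIdeal_of_coeIdeal_mul_eq_one, fun h => ?_⟩
  rw [← Localization.AtPrime.map_eq_maximalIdeal] at h
  obtain ⟨y, hy, hpy⟩ := IsLocalization.exists_mem_map_eq_map_span_singleton p.primeCompl h
  obtain ⟨s, hs, hsy⟩ :=
    IsLocalization.exists_mem_mul_mem_of_map_le_map p.primeCompl (IsNoetherian.noetherian p) hpy.le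
  exact coeIdeal_mul_inv_eq_one_of_mul_mem_span_singleton hp hp0 hy hs hsy

end FractionalIdeal

namespace IsOrder

variable {K : Type*} [Field K] [NumberField K] {O : Subalgebra ℤ K}

theorem exists_natCast_mul_mem (hO : IsOrder O) (z : K) : ∃ n : ℕ, n ≠ 0 ∧ (n : K) * z ∈ O := by
  have hz : z ∈ Submodule.span ℚ (O : Set K) := hO.spans ▸ Submodule.mem_top
  induction hz using Submodule.span_induction with
  | mem x hx => exact ⟨1, one_ne_zero, by simpa using hx⟩
  | zero => exact ⟨1, one_ne_zero, by simp⟩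
  | add x y _ _ hx hy =>
    obtain ⟨m, hm, hmx⟩ := hx
    obtain ⟨n, hn, hny⟩ := hy
    refine ⟨m * n, mul_ne_zero hm hn, ?_⟩
    have : ((m * n : ℕ) : K) * (x + y) = n * (m * x) + m * (n * y) := by push_cast; ring
    rw [this]
    exact O.add_mem (O.mul_mem (O.natCast_mem n) hmx) (O.mul_mem (O.natCast_mem m) hny)
  | smul q x _ hx =>
    obtain ⟨n, hn, hnx⟩ := hx
    refine ⟨q.den * n, mul_ne_zero q.den_nz hn, ?_⟩
    have : ((q.den * n : ℕ) : K) * (q • x) = q.num * (n * x) := by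
      rw [Rat.smul_def, Rat.cast_def]
      push_cast
      field_simp
    rw [this]
    exact O.mul_mem (O.intCast_mem q.num) hnx

theorem isFractionRing (hO : IsOrder O) : IsFractionRing O K :=
  IsFractionRing.of_field O K fun z => by
    obtain ⟨n, hn, hnz⟩ := hO.exists_natCast_mul_mem z
    exact ⟨⟨_, hnz⟩, n, by simp [hn]⟩

theorem isNoetherianRing (hO : IsOrder O) : IsNoetherianRing O :=
  have : IsNoetherian ℤ (integralClosure ℤ K) := inferInstanceAs (IsNoetherian ℤ (𝓞 K))
  have : IsNoetherian ℤ O := isNoetherian_of_injective (Subalgebra.inclusion hO.le).toLinearMap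
    (Subalgebra.inclusion_injective hO.le)
  isNoetherian_of_tower ℤ this

theorem dimensionLEOne (hO : IsOrder O) : Ring.DimensionLEOne O :=
  have : Algebra.IsIntegral ℤ O :=
    ⟨fun x => (isIntegral_algHom_iff O.val Subtype.val_injective).mp (hO.le x.2)⟩
  .of_isIntegral ℤ O

end IsOrder

/-- A nonzero prime ideal `p` of an order `O` in a number field `K` is regular
(the localization `O_p` is integrally closed) if and only if `p` is invertible as a fractional
`O`-ideal. -/
theorem regular_iff_invertible {K : Type*} [Field K] [NumberField K]
    (O : Subalgebra ℤ K) (hO : IsOrder O)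
    (p : Ideal O) [hp : p.IsPrime] (hp0 : p ≠ ⊥) :
    IsIntegrallyClosed (Localization.AtPrime p) ↔
      ∃ J : FractionalIdeal (↥O)⁰ K, (p : FractionalIdeal (↥O)⁰ K) * J = 1 := by
  have := hO.isFractionRing
  have := hO.isNoetherianRing
  have := hO.dimensionLEOne
  have : p.IsMaximal := hp.isMaximal hp0
  rw [Localization.AtPrime.isIntegrallyClosed_iff_isPrincipal_maximalIdeal,
    ← FractionalIdeal.mul_inv_cancel_iff,
    FractionalIdeal.coeIdeal_mul_inv_eq_one_iff_isPrincipal_maximalIdeal hp0]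
end

section
/- Let O be an order in a number field K with conductor f. Then K_{f,1} = {α/β : α, β ∈ O_K, both generating ideals coprime to f, and α ≡ β (mod f)}. -/
open NumberField
open scoped nonZeroDivisors

set_option maxHeartbeats 1000000
set_option synthInstance.maxHeartbeats 400000

/-- `α ≡* 1 (mod f)`: for every prime `P` dividing `f`, `α - 1 ∈ f·(O_K)_P`,
i.e. `v_P(α - 1) ≥ v_P(f)` for all primes `P` dividing `f`. -/
def EquivStarOne {K : Type*} [Field K] [NumberField K] (f : Ideal (𝓞 K)) (x : K) : Prop :=
  ∀ P : Ideal (𝓞 K), P.IsPrime → f ≤ P →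
    ∃ a ∈ f, ∃ b : 𝓞 K, b ∉ P ∧ x - 1 = (a : K) / (b : K)

/-- `K_f`: quotients `α/β` of elements of `O_K` whose generated ideals are coprime to `f`. -/
def Kf {K : Type*} [Field K] [NumberField K] (f : Ideal (𝓞 K)) : Set K :=
  {x | ∃ a b : 𝓞 K, Ideal.span {a} ⊔ f = ⊤ ∧ Ideal.span {b} ⊔ f = ⊤ ∧
    x = (a : K) / (b : K)}

/-- `K_{f,1} = {α ∈ K_f : α ≡* 1 (mod f)}`. -/
def Kf1 {K : Type*} [Field K] [NumberField K] (f : Ideal (𝓞 K)) : Set K :=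
  {x | x ∈ Kf f ∧ EquivStarOne f x}

/-! If `β` is prime to `f`, then `α/β - 1 = (α - β)/β` with a denominator that is a unit at
every prime over `f`, so `α/β ≡* 1 (mod f)` says that `α - β` lies in `f` locally at each such
prime; membership in an ideal is local at the maximal ideals containing it. -/

namespace Ideal

variable {R : Type*} [CommRing R] {I : Ideal R}

theorem mem_of_forall_isMaximal_exists_mul_mem {x : R}
    (h : ∀ M : Ideal R, M.IsMaximal → I ≤ M → ∃ d ∉ M, d * x ∈ I) : x ∈ I := by
  by_contra hx
  have hcolon : I.colon (span {x}) ≠ ⊤ := fun htop =>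
    hx (by simpa using mem_colon_span_singleton.mp ((eq_top_iff_one _).mp htop))
  obtain ⟨M, hM, hcolonM⟩ := exists_le_maximal _ hcolon
  have hIM : I ≤ M := fun r hr =>
    hcolonM (mem_colon_span_singleton.mpr (I.mul_mem_right x hr))
  obtain ⟨d, hdM, hdx⟩ := h M hM hIM
  exact hdM (hcolonM (mem_colon_span_singleton.mpr hdx))

theorem notMem_of_span_singleton_sup_eq_top {b : R} (hb : span {b} ⊔ I = ⊤)
    {P : Ideal R} (hP : P ≠ ⊤) (hIP : I ≤ P) : b ∉ P := fun hbP =>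
  hP (top_le_iff.mp (hb ▸ sup_le ((span_singleton_le_iff_mem _).mpr hbP) hIP))

end Ideal

theorem div_sub_one_eq_div_iff {K : Type*} [Field K] {a b c d : 𝓞 K}
    (hb : b ≠ 0) (hd : d ≠ 0) :
    (a : K) / b - 1 = c / d ↔ d * (a - b) = b * c := by
  have hbK : (b : K) ≠ 0 := by exact_mod_cast hb
  have hdK : (d : K) ≠ 0 := by exact_mod_cast hd
  rw [← RingOfIntegers.coe_injective.eq_iff, div_sub_one hbK, div_eq_div_iff hbK hdK]
  push_cast
  constructor <;> intro h <;> linear_combination h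

section

variable {K : Type*} [Field K] [NumberField K] {f : Ideal (𝓞 K)}

theorem equivStarOne_div_iff {a b : 𝓞 K} (hb : Ideal.span {b} ⊔ f = ⊤) :
    EquivStarOne f ((a : K) / b) ↔ a - b ∈ f := by
  have hbP {P : Ideal (𝓞 K)} (hP : P.IsPrime) (hfP : f ≤ P) : b ∉ P :=
    Ideal.notMem_of_span_singleton_sup_eq_top hb hP.ne_top hfP
  have hb0 {P : Ideal (𝓞 K)} (hP : P.IsPrime) (hfP : f ≤ P) : b ≠ 0 :=
    fun h => hbP hP hfP (h ▸ P.zero_mem)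
  constructor
  · intro hstar
    refine Ideal.mem_of_forall_isMaximal_exists_mul_mem fun M hM hfM => ?_
    obtain ⟨c, hc, d, hdM, heq⟩ := hstar M hM.isPrime hfM
    have hd : d ≠ 0 := fun h => hdM (h ▸ M.zero_mem)
    refine ⟨d, hdM, ?_⟩
    rw [(div_sub_one_eq_div_iff (hb0 hM.isPrime hfM) hd).mp heq]
    exact f.mul_mem_left b hc
  · intro hab P hP hfP
    refine ⟨a - b, hab, b, hbP hP hfP, ?_⟩
    rw [div_sub_one_eq_div_iff (hb0 hP hfP) (hb0 hP hfP), mul_comm]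

theorem kf1_eq_setOf_sub_mem :
    Kf1 f = {x : K | ∃ a b : 𝓞 K, Ideal.span {a} ⊔ f = ⊤ ∧
      Ideal.span {b} ⊔ f = ⊤ ∧ a - b ∈ f ∧ x = (a : K) / (b : K)} := by
  ext x
  constructor
  · rintro ⟨⟨a, b, ha, hb, rfl⟩, hstar⟩
    exact ⟨a, b, ha, hb, (equivStarOne_div_iff hb).mp hstar, rfl⟩
  · rintro ⟨a, b, ha, hb, hab, rfl⟩
    exact ⟨⟨a, b, ha, hb, rfl⟩, (equivStarOne_div_iff hb).mpr hab⟩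

end

theorem kf1_eq_quotients_congruent_general {K : Type*} [Field K] [NumberField K]
    (O : Subalgebra ℤ K) :
    Kf1 (condOK O) =
      {x : K | ∃ a b : 𝓞 K, Ideal.span {a} ⊔ condOK O = ⊤ ∧
        Ideal.span {b} ⊔ condOK O = ⊤ ∧ a - b ∈ condOK O ∧ x = (a : K) / (b : K)} :=
  kf1_eq_setOf_sub_mem

/-- `K_{f,1}` consists exactly of the quotients `α/β` with `α, β ∈ O_K`
generating ideals coprime to `f` and `α ≡ β (mod f)`, where `f` is the conductor of the
order `O`. -/
theorem kf1_eq_quotients_congruent {K : Type*} [Field K] [NumberField K]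
    (O : Subalgebra ℤ K) (hO : IsOrder O) :
    Kf1 (condOK O) =
      {x : K | ∃ a b : 𝓞 K, Ideal.span {a} ⊔ condOK O = ⊤ ∧
        Ideal.span {b} ⊔ condOK O = ⊤ ∧ a - b ∈ condOK O ∧ x = (a : K) / (b : K)} :=
  kf1_eq_quotients_congruent_general O
end

section
/- Let O be an order in a number field K with conductor f. Then K_{f,1} ⊆ K_{f,O} and O_K^× ∩ K_{f,O} = O^×, where K_{f,O} = {α/β : α, β ∈ O both generating O-ideals coprime to f} and K_{f,1} = {α/β : α, β ∈ O_K coprime to f and α ≡ β mod f}. -/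
/-! An element of `O_K` congruent to `1` modulo the conductor `f` lies in `O` and generates an
`O`-ideal coprime to `f`. Multiplying numerator and denominator of `α / β ∈ K_{f,1}` by an
inverse `u` of `β` modulo `f` turns both into such elements, the numerator because `≡* 1`
gives `α u ≡ β u (mod f)` locally at every prime above `f`. Conversely, an element `c ∈ O`
coprime to `f` can be cancelled in `O`: if `c m ∈ O` with `m ∈ O_K`, then `1 = r c + t` with
`t ∈ f` gives `m = r (c m) + t m ∈ O`. So if `a / b` is a unit of `O_K` with `a, b ∈ O` coprime
to `f`, both it and its inverse `b / a` lie in `O`. -/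

open NumberField
open scoped nonZeroDivisors

set_option maxHeartbeats 1000000
set_option synthInstance.maxHeartbeats 400000

/-- `K_{f,O}`: quotients `α/β` with `α, β ∈ O` generating `O`-ideals coprime to the
conductor `f`. -/
def KfO {K : Type*} [Field K] [NumberField K] (O : Subalgebra ℤ K) : Set K :=
  {x | ∃ a b : O, Ideal.span {a} ⊔ condO O = ⊤ ∧ Ideal.span {b} ⊔ condO O = ⊤ ∧
    x = (a : K) / (b : K)}


section KfAux


theorem Ideal.mem_of_forall_isMaximal {R : Type*} [CommRing R] {I : Ideal R} {z : R}
    (h : ∀ M : Ideal R, M.IsMaximal → I ≤ M → ∃ c ∉ M, z * c ∈ I) : z ∈ I := by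
  by_contra hz
  have hJ : I.colon (Ideal.span {z}) ≠ ⊤ := by
    rw [Ne, Ideal.eq_top_iff_one, Submodule.mem_colon_span_singleton, one_smul]
    exact hz
  obtain ⟨M, hM, hJM⟩ := Ideal.exists_le_maximal _ hJ
  have hIM : I ≤ M := fun t ht => hJM <|
    Submodule.mem_colon_span_singleton.mpr (I.mul_mem_right z ht)
  obtain ⟨c, hcM, hzc⟩ := h M hM hIM
  exact hcM <| hJM <| Submodule.mem_colon_span_singleton.mpr (by rwa [smul_eq_mul, mul_comm])

section Conductor

variable {K : Type*} [Field K] [NumberField K]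

/-- Locally at each maximal ideal above `f`, `(γ - δ) b = δ a` with `a ∈ f` and `b` a unit. -/
theorem EquivStarOne.sub_mem {f : Ideal (𝓞 K)} {x : K} (hx : EquivStarOne f x)
    {γ δ : 𝓞 K} (hγ : (γ : K) = x * δ) : γ - δ ∈ f := by
  refine Ideal.mem_of_forall_isMaximal fun M hM hfM => ?_
  obtain ⟨a, haf, b, hbM, hxab⟩ := hx M hM.isPrime hfM
  have hb : (b : K) ≠ 0 := by
    rw [Ne, RingOfIntegers.coe_eq_zero_iff]
    rintro rfl
    exact hbM M.zero_mem
  refine ⟨b, hbM, ?_⟩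
  have hkey : (γ - δ) * b = δ * a := by
    apply RingOfIntegers.ext
    rw [eq_div_iff hb] at hxab
    push_cast
    linear_combination (b : K) * hγ + (δ : K) * hxab
  exact hkey ▸ f.mul_mem_left δ haf

theorem exists_eq_div_of_mem_Kf1 {f : Ideal (𝓞 K)} {x : K} (hx : x ∈ Kf1 f) :
    ∃ γ δ : 𝓞 K, γ - 1 ∈ f ∧ δ - 1 ∈ f ∧ x = γ / δ := by
  obtain ⟨⟨α, β, -, hβ, rfl⟩, hx1⟩ := hx
  by_cases hf : f = ⊤
  · subst hf
    exact ⟨α, β, Submodule.mem_top, Submodule.mem_top, rfl⟩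
  -- scale `α / β` by an inverse `u` of `β` modulo `f`
  obtain ⟨u, t, ht, hut⟩ :=
    Ideal.mem_span_singleton_sup.mp (hβ ▸ Submodule.mem_top : (1 : 𝓞 K) ∈ _)
  have hδ : u * β - 1 ∈ f := by
    rw [← hut, sub_add_cancel_left]
    exact f.neg_mem ht
  have hne : u * β ≠ 0 := fun h0 => hf <| (Ideal.eq_top_iff_one f).mpr <| by
    simpa [h0] using f.neg_mem hδ
  have hne' : (u * β : K) ≠ 0 := by exact_mod_cast hne
  have hγδ : u * α - u * β ∈ f :=
    hx1.sub_mem (by push_cast; field_simp [right_ne_zero_of_mul hne'])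
  refine ⟨u * α, u * β, by simpa using f.add_mem hγδ hδ, hδ, ?_⟩
  push_cast
  rw [mul_div_mul_left _ _ (left_ne_zero_of_mul hne')]

variable {O : Subalgebra ℤ K}

theorem coe_mem_of_mem_condOK {a : 𝓞 K} (ha : a ∈ condOK O) : (a : K) ∈ O := by
  simpa using ha 1

theorem exists_coprime_of_sub_one_mem_condOK {w : 𝓞 K} (hw : w - 1 ∈ condOK O) :
    ∃ c : O, (c : K) = w ∧ Ideal.span {c} ⊔ condO O = ⊤ := by
  have hwO : (w : K) ∈ O := by
    simpa using O.add_mem (coe_mem_of_mem_condOK hw) O.one_mem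
  refine ⟨⟨w, hwO⟩, rfl, ?_⟩
  have hcond : (1 - ⟨w, hwO⟩ : O) ∈ condO O := fun b => by
    simpa [sub_mul] using O.neg_mem (hw b)
  have h1 := Submodule.add_mem_sup (Ideal.mem_span_singleton_self (⟨w, hwO⟩ : O)) hcond
  rwa [add_sub_cancel, ← Ideal.eq_top_iff_one] at h1

theorem Kf1_subset_KfO : Kf1 (condOK O) ⊆ KfO O := by
  intro x hx
  obtain ⟨γ, δ, hγ, hδ, rfl⟩ := exists_eq_div_of_mem_Kf1 hx
  obtain ⟨c, hcγ, hc⟩ := exists_coprime_of_sub_one_mem_condOK hγ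
  obtain ⟨d, hdδ, hd⟩ := exists_coprime_of_sub_one_mem_condOK hδ
  exact ⟨c, d, hc, hd, by rw [hcγ, hdδ]⟩

theorem coe_mem_of_mul_mem {c : O} (hc : Ideal.span {c} ⊔ condO O = ⊤) {m : 𝓞 K}
    (h : (c : K) * m ∈ O) : (m : K) ∈ O := by
  obtain ⟨r, t, ht, hrt⟩ :=
    Ideal.mem_span_singleton_sup.mp (hc ▸ Submodule.mem_top : (1 : O) ∈ _)
  have hm : (m : K) = r * (c * m) + t * m := by
    have := congrArg (fun y : O => (y : K) * m) hrt
    simp only [Subalgebra.coe_add, Subalgebra.coe_mul, Subalgebra.coe_one] at this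
    linear_combination -this
  rw [hm]
  exact O.add_mem (O.mul_mem r.2 h) (ht m)

theorem Subalgebra.exists_units_coe_eq {R A : Type*} [CommRing R] [CommRing A] [Algebra R A]
    {S : Subalgebra R A} {y z : A} (hy : y ∈ S) (hz : z ∈ S) (h : y * z = 1) :
    ∃ u : Sˣ, ((u : S) : A) = y :=
  ⟨⟨⟨y, hy⟩, ⟨z, hz⟩, Subtype.ext h, Subtype.ext ((mul_comm z y).trans h)⟩, rfl⟩

theorem exists_units_O_of_mem_KfO {u : (𝓞 K)ˣ} (hu : ((u : 𝓞 K) : K) ∈ KfO O) :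
    ∃ v : Oˣ, ((v : O) : K) = (u : 𝓞 K) := by
  obtain ⟨a, b, ha, hb, hx⟩ := hu
  have hinv : ((u : 𝓞 K) : K) * ((u⁻¹ : (𝓞 K)ˣ) : 𝓞 K) = 1 := by simp
  have hb0 : (b : K) ≠ 0 := fun h0 => by simp [hx, h0] at hinv
  have hxa : (b : K) * (u : 𝓞 K) = a := by rw [hx, mul_div_cancel₀ _ hb0]
  have hyb : (a : K) * ((u⁻¹ : (𝓞 K)ˣ) : 𝓞 K) = b := by
    rw [← hxa, mul_assoc, hinv, mul_one]
  exact Subalgebra.exists_units_coe_eq (coe_mem_of_mul_mem hb (hxa ▸ a.2))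
    (coe_mem_of_mul_mem ha (hyb ▸ b.2)) hinv

end Conductor

/-- `K_{f,1} ⊆ K_{f,O}` and `O_K^× ∩ K_{f,O} = O^×`. -/
theorem kf1_subset_kfO_and_units_inter {K : Type*} [Field K] [NumberField K]
    (O : Subalgebra ℤ K) (hO : IsOrder O) :
    Kf1 (condOK O) ⊆ KfO O ∧
    {x : K | ∃ u : (𝓞 K)ˣ, ((u : 𝓞 K) : K) = x} ∩ KfO O
      = {x : K | ∃ u : (↥O)ˣ, ((u : O) : K) = x} := by
  refine ⟨Kf1_subset_KfO, Set.ext fun x => ⟨?_, ?_⟩⟩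
  · rintro ⟨⟨u, rfl⟩, hu⟩
    exact exists_units_O_of_mem_KfO hu
  · rintro ⟨u, rfl⟩
    have hinv : ((u : O) : K) * ((u⁻¹ : Oˣ) : O) = 1 := by
      exact_mod_cast congrArg Subtype.val u.mul_inv
    obtain ⟨v, hv⟩ := Subalgebra.exists_units_coe_eq (S := integralClosure ℤ K)
      (hO.le (u : O).2) (hO.le ((u⁻¹ : Oˣ) : O).2) hinv
    refine ⟨⟨v, hv⟩, u, 1, ?_, ?_, by simp⟩
    · rw [Ideal.span_singleton_eq_top.mpr u.isUnit, top_sup_eq]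
    · rw [Ideal.span_singleton_one, top_sup_eq]
end KfAux
end

section
/- Let O be an order in a number field K with conductor f, and let H_O be the ring class field of O (the unique abelian extension of K unramified outside f whose Artin map on J_K^f has kernel P_{K,O}^f). Let P be a prime ideal of O_K coprime to f. Then P splits completely in H_O if and only if P = αO_K for some α ∈ O. -/
open NumberField
open scoped nonZeroDivisors

set_option maxHeartbeats 1000000
set_option synthInstance.maxHeartbeats 400000

/-- `J_K^f`: the subgroup of fractional `O_K`-ideals generated by the prime ideals of `O_K`
not dividing the conductor `f` of the order `O`. -/
noncomputable def JKf {K : Type*} [Field K] [NumberField K] (O : Subalgebra ℤ K) :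
    Subgroup (FractionalIdeal (𝓞 K)⁰ K)ˣ :=
  Subgroup.closure
    {u | ∃ P : Ideal (𝓞 K), P.IsPrime ∧ P ≠ ⊥ ∧ ¬ condOK O ≤ P ∧
      (u : FractionalIdeal (𝓞 K)⁰ K) = P}

/-- `P_{K,1}^f`: the group of principal fractional ideals `α·O_K` with `α ∈ K_{f,1}`. -/
noncomputable def PK1f {K : Type*} [Field K] [NumberField K] (O : Subalgebra ℤ K) :
    Subgroup (FractionalIdeal (𝓞 K)⁰ K)ˣ :=
  Subgroup.closure
    {u | ∃ x ∈ Kf1 (condOK O),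
      (u : FractionalIdeal (𝓞 K)⁰ K) = FractionalIdeal.spanSingleton (𝓞 K)⁰ x}

/-- `P_{K,O}^f`: the subgroup generated by the principal ideals `α·O_K` with `α ∈ O` and
`α·O + f = O`. -/
noncomputable def PKOf {K : Type*} [Field K] [NumberField K] (O : Subalgebra ℤ K) :
    Subgroup (FractionalIdeal (𝓞 K)⁰ K)ˣ :=
  Subgroup.closure
    {u | ∃ α : O, Ideal.span {α} ⊔ condO O = ⊤ ∧
      (u : FractionalIdeal (𝓞 K)⁰ K) = FractionalIdeal.spanSingleton (𝓞 K)⁰ (α : K)}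

/-- A (nonzero) prime ideal `p` splits completely along a ring extension `g : A → B` if the
ramification index and inertia degree of every prime of `B` lying over `p` are `1`. -/
def SplitsCompletely {A B : Type*} [CommRing A] [CommRing B] (g : A →+* B)
    (p : Ideal A) : Prop :=
  Ideal.map g p ≠ ⊤ ∧
    ∀ Q : Ideal B, Q.IsPrime → Q ≠ ⊥ → Ideal.comap g Q = p →
      letI := g.toAlgebra
      Ideal.ramificationIdx' p Q = 1 ∧ Ideal.inertiaDeg' p Q = 1

/-! By the Artin-map hypothesis, a prime `P` coprime to `f` splits completely iff it lies in
`P_{K,O}^f`. Elements of that group are `(α/β)·O_K` with `α, β ∈ O` invertible modulo `f` in `O`;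
when this is the integral ideal `P`, the element `α/β` lies in `O_K`, and inverting `β` modulo `f`
inside `O` puts it in `O`. Conversely, a generator `a ∈ O` of `P` is invertible modulo `f` in
`O_K`; its inverse there is integral over `ℤ`, hence a polynomial in `a` modulo `f`, so `a` is
already invertible modulo `f` in `O`. -/

open Polynomial in
theorem Polynomial.exists_aeval_eq_of_mul_eq_one {S R : Type*} [CommRing S] [CommRing R]
    [Algebra S R] {x y : R} (hxy : x * y = 1) (hy : IsIntegral S y) :
    ∃ q : S[X], aeval x q = y := by
  obtain ⟨p, hp, hpy⟩ := hy
  let : Invertible y := invertibleOfLeftInverse y x hxy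
  have hrev : aeval x p.reverse = 0 := by
    have h := eval₂_reverse_mul_pow (algebraMap S R) y p
    rw [hpy, invOf_eq_left_inv hxy] at h
    simpa [aeval_def, (isUnit_of_invertible y).pow _ |>.mul_left_eq_zero] using h
  -- `p.reverse = p.reverse.divX * X + 1` as `p` is monic, so `y = x⁻¹` is `-p.reverse.divX` at `x`.
  refine ⟨-p.reverse.divX, ?_⟩
  have hsplit := congrArg (aeval x) p.reverse.divX_mul_X_add
  rw [coeff_zero_reverse, hp.leadingCoeff, hrev] at hsplit
  simp only [map_add, map_mul, aeval_X, map_one] at hsplit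
  rw [map_neg]
  linear_combination (-y) * hsplit + (aeval x p.reverse.divX) * hxy

open Polynomial in
theorem Ideal.exists_mul_aeval_sub_one_mem_of_sup_eq_top {S R : Type*} [CommRing S]
    [CommRing R] [Algebra S R] [Algebra.IsIntegral S R] {I : Ideal R} {a : R}
    (h : Ideal.span {a} ⊔ I = ⊤) : ∃ q : S[X], a * aeval a q - 1 ∈ I := by
  obtain ⟨s, c, hc, hsc⟩ := Ideal.mem_span_singleton_sup.mp (h ▸ Submodule.mem_top : (1 : R) ∈ _)
  have hunit : Ideal.Quotient.mk I a * Ideal.Quotient.mk I s = 1 := by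
    rw [← map_mul, ← map_one (Ideal.Quotient.mk I), Ideal.Quotient.eq,
      show a * s - 1 = -c by linear_combination hsc]
    exact neg_mem hc
  obtain ⟨q, hq⟩ := exists_aeval_eq_of_mul_eq_one hunit
    ((Algebra.IsIntegral.isIntegral (R := S) s).map (Ideal.Quotient.mkₐ S I))
  refine ⟨q, Ideal.Quotient.eq_zero_iff_mem.mp ?_⟩
  have hmk : Ideal.Quotient.mk I (aeval a q) = aeval (Ideal.Quotient.mk I a) q :=
    (aeval_algHom_apply (Ideal.Quotient.mkₐ S I) a q).symm
  rw [map_sub, map_mul, hmk, hq, hunit, map_one, sub_self]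

theorem Ideal.span_singleton_mul_sup_eq_top {R : Type*} [CommRing R] {a b : R} {I : Ideal R}
    (ha : Ideal.span {a} ⊔ I = ⊤) (hb : Ideal.span {b} ⊔ I = ⊤) :
    Ideal.span {a * b} ⊔ I = ⊤ := by
  rw [← Ideal.isCoprime_iff_sup_eq, ← Ideal.span_singleton_mul_span_singleton] at *
  exact ha.mul_left hb

section Order

variable {K : Type*} [Field K] [NumberField K] (O : Subalgebra ℤ K)

open Polynomial in
theorem span_singleton_sup_condO_eq_top {a : 𝓞 K} (ha : (a : K) ∈ O)
    (h : Ideal.span {a} ⊔ condOK O = ⊤) :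
    Ideal.span {(⟨a, ha⟩ : O)} ⊔ condO O = ⊤ := by
  obtain ⟨q, hq⟩ := Ideal.exists_mul_aeval_sub_one_mem_of_sup_eq_top (S := ℤ) h
  set t : O := aeval ⟨a, ha⟩ q
  have ht : (t : K) = ((aeval a q : 𝓞 K) : K) := by simp [t, aeval_def, eval₂_eq_sum_range]
  refine Ideal.eq_top_iff_one _ |>.mpr <| Ideal.mem_span_singleton_sup.mpr
    ⟨t, 1 - t * ⟨a, ha⟩, fun c ↦ ?_, add_sub_cancel _ _⟩
  convert O.neg_mem (hq c) using 1
  push_cast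
  rw [ht]
  ring

theorem mem_of_mul_mem_of_span_singleton_sup_condO_eq_top {β : O}
    (hβ : Ideal.span {β} ⊔ condO O = ⊤) {y : 𝓞 K} (h : (β : K) * y ∈ O) : (y : K) ∈ O := by
  obtain ⟨t, c, hc, htc⟩ := Ideal.mem_span_singleton_sup.mp (Ideal.eq_top_iff_one _ |>.mp hβ)
  have hy : (y : K) = t * ((β : K) * y) + c * y := by
    rw [← mul_assoc, ← add_mul, ← Subalgebra.coe_mul, ← Subalgebra.coe_add, htc]
    simp
  rw [hy]
  exact O.add_mem (O.mul_mem t.2 h) (hc y)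

theorem exists_eq_spanSingleton_div_of_mem_PKOf {w : (FractionalIdeal (𝓞 K)⁰ K)ˣ}
    (hw : w ∈ PKOf O) :
    ∃ α β : O, Ideal.span {α} ⊔ condO O = ⊤ ∧ Ideal.span {β} ⊔ condO O = ⊤ ∧
      (w : FractionalIdeal (𝓞 K)⁰ K) = FractionalIdeal.spanSingleton _ ((α : K) / β) := by
  have hone : Ideal.span {(1 : O)} ⊔ condO O = ⊤ := by simp
  induction hw using Subgroup.closure_induction with
  | mem w hw =>
    obtain ⟨α, hα, hw⟩ := hw
    exact ⟨α, 1, hα, hone, by simpa using hw⟩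
  | one => exact ⟨1, 1, hone, hone, by simp⟩
  | mul w w' _ _ ih ih' =>
    obtain ⟨α, β, hα, hβ, hw⟩ := ih
    obtain ⟨α', β', hα', hβ', hw'⟩ := ih'
    refine ⟨α * α', β * β', Ideal.span_singleton_mul_sup_eq_top hα hα',
      Ideal.span_singleton_mul_sup_eq_top hβ hβ', ?_⟩
    rw [Units.val_mul, hw, hw', FractionalIdeal.spanSingleton_mul_spanSingleton,
      div_mul_div_comm, Subalgebra.coe_mul, Subalgebra.coe_mul]
  | inv w _ ih =>
    obtain ⟨α, β, hα, hβ, hw⟩ := ih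
    refine ⟨β, α, hβ, hα, ?_⟩
    rw [Units.val_inv_eq_inv_val, hw, FractionalIdeal.spanSingleton_inv, inv_div]

theorem exists_mem_eq_span_of_mem_PKOf {P : Ideal (𝓞 K)} {w : (FractionalIdeal (𝓞 K)⁰ K)ˣ}
    (hwP : (w : FractionalIdeal (𝓞 K)⁰ K) = P) (hw : w ∈ PKOf O) :
    ∃ a : 𝓞 K, (a : K) ∈ O ∧ P = Ideal.span {a} := by
  obtain ⟨α, β, -, hβ, hw⟩ := exists_eq_spanSingleton_div_of_mem_PKOf O hw
  have hβ0 : (β : K) ≠ 0 := by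
    rintro h
    rw [h, div_zero, FractionalIdeal.spanSingleton_zero] at hw
    exact w.ne_zero hw
  have hmem : (α : K) / β ∈ (P : FractionalIdeal (𝓞 K)⁰ K) :=
    hwP ▸ hw ▸ FractionalIdeal.mem_spanSingleton_self _ _
  obtain ⟨a, -, ha⟩ := (FractionalIdeal.mem_coeIdeal _).mp hmem
  refine ⟨a, mem_of_mul_mem_of_span_singleton_sup_condO_eq_top O hβ ?_, ?_⟩
  · rw [show (a : K) = _ from ha, mul_div_cancel₀ _ hβ0]
    exact α.2
  · apply FractionalIdeal.coeIdeal_injective (K := K)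
    change (P : FractionalIdeal (𝓞 K)⁰ K) = Ideal.span {a}
    rw [FractionalIdeal.coeIdeal_span_singleton, ← hwP, hw]
    exact congrArg _ ha.symm

theorem exists_unit_eq_span_mem_PKOf {a : 𝓞 K} (ha : (a : K) ∈ O) (ha0 : a ≠ 0)
    (h : Ideal.span {a} ⊔ condOK O = ⊤) :
    ∃ w : (FractionalIdeal (𝓞 K)⁰ K)ˣ,
      (w : FractionalIdeal (𝓞 K)⁰ K) = Ideal.span {a} ∧ w ∈ PKOf O := by
  have hspan : (Ideal.span {a} : FractionalIdeal (𝓞 K)⁰ K) ≠ 0 := by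
    rwa [Ne, FractionalIdeal.coeIdeal_eq_zero, Ideal.span_singleton_eq_bot]
  refine ⟨Units.mk0 _ hspan, rfl, Subgroup.subset_closure
    ⟨⟨a, ha⟩, span_singleton_sup_condO_eq_top O ha h, ?_⟩⟩
  exact FractionalIdeal.coeIdeal_span_singleton a

end Order

theorem splits_completely_iff_principal_from_order_general {K : Type*} [Field K] [NumberField K]
    (O : Subalgebra ℤ K)
    (L : Type*) [Field L] [Algebra K L]
    (hartin : ∀ P : Ideal (𝓞 K), P.IsPrime → P ≠ ⊥ → ¬ condOK O ≤ P →
      (SplitsCompletely (algebraMap (𝓞 K) (𝓞 L)) P ↔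
        ∃ u : (FractionalIdeal (𝓞 K)⁰ K)ˣ,
          (u : FractionalIdeal (𝓞 K)⁰ K) = P ∧ u ∈ PKOf O))
    (P : Ideal (𝓞 K)) (hP : P.IsPrime) (hP0 : P ≠ ⊥) (hPf : ¬ condOK O ≤ P) :
    SplitsCompletely (algebraMap (𝓞 K) (𝓞 L)) P ↔
      ∃ a : 𝓞 K, (a : K) ∈ O ∧ P = Ideal.span {a} := by
  rw [hartin P hP hP0 hPf]
  refine ⟨fun ⟨w, hwP, hw⟩ ↦ exists_mem_eq_span_of_mem_PKOf O hwP hw, ?_⟩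
  rintro ⟨a, ha, rfl⟩
  have hcop : Ideal.span {a} ⊔ condOK O = ⊤ :=
    codisjoint_iff.mp ((hP.isMaximal hP0).out.not_le_iff_codisjoint.mp hPf)
  exact exists_unit_eq_span_mem_PKOf O ha (by simpa using hP0) hcop

/-- Let `H_O` (here `L`) be the ring class field of the order `O`: the
abelian extension of `K`, unramified outside the conductor `f`, in which a prime ideal of
`O_K` coprime to `f` splits completely precisely when its class lies in `P_{K,O}^f`
(this is the statement that the kernel of the Artin map is `P_{K,O}^f`).  Then a prime
ideal `P` of `O_K` coprime to `f` splits completely in `H_O` if and only if `P = α·O_K`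
for some `α ∈ O`. -/
theorem splits_completely_iff_principal_from_order {K : Type*} [Field K] [NumberField K]
    (O : Subalgebra ℤ K) (hO : IsOrder O)
    (L : Type*) [Field L] [NumberField L] [Algebra K L] [FiniteDimensional K L]
    [IsGalois K L]
    (habelian : ∀ σ τ : L ≃ₐ[K] L, σ * τ = τ * σ)
    (hunram : ∀ (P : Ideal (𝓞 K)), P.IsPrime → P ≠ ⊥ → ¬ condOK O ≤ P →
      ∀ Q : Ideal (𝓞 L), Q.IsPrime → Q ≠ ⊥ →
        Ideal.comap (algebraMap (𝓞 K) (𝓞 L)) Q = P →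
        Ideal.ramificationIdx' P Q = 1)
    (hartin : ∀ P : Ideal (𝓞 K), P.IsPrime → P ≠ ⊥ → ¬ condOK O ≤ P →
      (SplitsCompletely (algebraMap (𝓞 K) (𝓞 L)) P ↔
        ∃ u : (FractionalIdeal (𝓞 K)⁰ K)ˣ,
          (u : FractionalIdeal (𝓞 K)⁰ K) = P ∧ u ∈ PKOf O))
    (P : Ideal (𝓞 K)) (hP : P.IsPrime) (hP0 : P ≠ ⊥) (hPf : ¬ condOK O ≤ P) :
    SplitsCompletely (algebraMap (𝓞 K) (𝓞 L)) P ↔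
      ∃ a : 𝓞 K, (a : K) ∈ O ∧ P = Ideal.span {a} :=
  splits_completely_iff_principal_from_order_general O L hartin P hP hP0 hPf
end

section
/- Let d ≥ 5 and n ≥ 1 be two distinct rational primes both congruent to 1 mod 4. If the Legendre symbol (d/n) = −1, or the quartic residue symbol (d/n)_4 = −1, then there exist α, β ∈ O_F with F = Q(√−d) such that −1 = α² + nβ². -/
open NumberField

/-!
Since `dn` is not a square, the Pell equation `x² - dny² = 1` has a solution with `y > 0`.
For the one with least `x`, `x = 2t + 1` and `y = 2w` give `t(t + 1) = dnw²` with coprime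
factors, so one of `dna² + 1 = b²`, `a² + 1 = dnb²`, `na² + 1 = db²`, `da² + 1 = nb²` holds;
the first contradicts minimality. The next two give `-1 = α² + nβ²` with `α, β` in `ℤ[√-d]`.
The last one is excluded by the symbols: modulo `d` it forces `(n/d) = 1`, hence `(d/n) = 1`;
modulo `n` it gives `da² ≡ -1`, so if `d^((n-1)/4) ≡ -1` Euler's criterion makes
`(a/n) = -(2/n)`, whereas `(a/n) = (2/n)`: every odd `m ∣ a` has `(m/n) = (n/m) = 1`, and
`a ≡ 2 mod 4` when `n ≡ 5 mod 8`.
-/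

namespace Nat

theorem Prime.not_isSquare_mul {p q : ℕ} (hp : p.Prime) (hq : q.Prime) (hpq : p ≠ q) :
    ¬IsSquare (p * q) := by
  rintro ⟨r, hr⟩
  have hsq : Squarefree (p * q) :=
    Nat.squarefree_mul_iff.mpr ⟨(Nat.coprime_primes hp hq).mpr hpq, hp.squarefree, hq.squarefree⟩
  have hr1 : r = 1 := Nat.isUnit_iff.mp (hsq r (hr ▸ dvd_rfl))
  have := Nat.mul_le_mul hp.two_le hq.two_le
  simp [hr1] at hr
  omega

theorem exists_sq_eq_mul_sq_add_one_of_not_isSquare {D : ℕ} (hD : 0 < D) (hsq : ¬IsSquare D) :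
    ∃ x y : ℕ, x ^ 2 = D * y ^ 2 + 1 ∧ 0 < y := by
  obtain ⟨x, y, h, hy⟩ := Pell.exists_of_not_isSquare (d := (D : ℤ)) (by exact_mod_cast hD)
    (by rwa [Int.isSquare_natCast_iff])
  refine ⟨x.natAbs, y.natAbs, ?_, Int.natAbs_pos.mpr hy⟩
  zify
  rw [sq_abs, sq_abs]
  linarith

theorem Coprime.exists_eq_sq_of_mul_eq_sq {t u w : ℕ} (h : t.Coprime u) (htu : t * u = w ^ 2) :
    ∃ a b, t = a ^ 2 ∧ u = b ^ 2 := by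
  obtain ⟨a, ha⟩ := exists_eq_pow_of_mul_eq_pow (Nat.isUnit_iff.mpr h) htu
  obtain ⟨b, hb⟩ := exists_eq_pow_of_mul_eq_pow (Nat.isUnit_iff.mpr h.symm) (by rw [mul_comm, htu])
  exact ⟨a, b, ha, hb⟩

theorem Coprime.eq_prime_mul_or_eq_prime_mul {p t u m : ℕ} (hp : p.Prime) (h : t.Coprime u)
    (htu : t * u = p * m) :
    (∃ t', t = p * t' ∧ t'.Coprime u ∧ t' * u = m) ∨
      (∃ u', u = p * u' ∧ t.Coprime u' ∧ t * u' = m) := by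
  rcases (Nat.Prime.dvd_mul hp).mp ⟨m, htu⟩ with ⟨t', rfl⟩ | ⟨u', rfl⟩
  · exact .inl ⟨t', rfl, h.coprime_mul_left,
      Nat.eq_of_mul_eq_mul_left hp.pos (by rw [← htu, mul_assoc])⟩
  · exact .inr ⟨u', rfl, h.coprime_mul_left_right,
      Nat.eq_of_mul_eq_mul_left hp.pos (by rw [← htu, mul_left_comm])⟩

theorem Coprime.exists_sq_of_mul_eq_prime_mul_prime_mul_sq {p q t u w : ℕ} (hp : p.Prime)
    (hq : q.Prime) (h : t.Coprime u) (htu : t * u = p * q * w ^ 2) :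
    ∃ a b, (t = a ^ 2 ∧ u = p * q * b ^ 2) ∨ (t = p * a ^ 2 ∧ u = q * b ^ 2) ∨
      (t = q * a ^ 2 ∧ u = p * b ^ 2) ∨ (t = p * q * a ^ 2 ∧ u = b ^ 2) := by
  rw [mul_assoc] at htu
  rcases h.eq_prime_mul_or_eq_prime_mul hp htu with ⟨t₁, rfl, h₁, ht₁⟩ | ⟨u₁, rfl, h₁, hu₁⟩
  · rcases h₁.eq_prime_mul_or_eq_prime_mul hq ht₁ with ⟨t₂, rfl, h₂, ht₂⟩ | ⟨u₂, rfl, h₂, hu₂⟩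
    · obtain ⟨a, b, rfl, rfl⟩ := h₂.exists_eq_sq_of_mul_eq_sq ht₂
      exact ⟨a, b, .inr <| .inr <| .inr ⟨by ring, rfl⟩⟩
    · obtain ⟨a, b, rfl, rfl⟩ := h₂.exists_eq_sq_of_mul_eq_sq hu₂
      exact ⟨a, b, .inr <| .inl ⟨rfl, rfl⟩⟩
  · rcases h₁.eq_prime_mul_or_eq_prime_mul hq hu₁ with ⟨t₂, rfl, h₂, ht₂⟩ | ⟨u₂, rfl, h₂, hu₂⟩
    · obtain ⟨a, b, rfl, rfl⟩ := h₂.exists_eq_sq_of_mul_eq_sq ht₂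
      exact ⟨a, b, .inr <| .inr <| .inl ⟨rfl, rfl⟩⟩
    · obtain ⟨a, b, rfl, rfl⟩ := h₂.exists_eq_sq_of_mul_eq_sq hu₂
      exact ⟨a, b, .inl ⟨rfl, by ring⟩⟩

theorem exists_eq_two_mul_add_one_of_sq_eq_mul_sq_add_one {D x y : ℕ} (hD : D % 4 = 1)
    (h : x ^ 2 = D * y ^ 2 + 1) :
    ∃ t w, x = 2 * t + 1 ∧ y = 2 * w ∧ t * (t + 1) = D * w ^ 2 := by
  obtain ⟨k, rfl⟩ : ∃ k, D = 4 * k + 1 := ⟨D / 4, by omega⟩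
  obtain ⟨w, rfl | rfl⟩ := Nat.even_or_odd' y <;> obtain ⟨t, rfl | rfl⟩ := Nat.even_or_odd' x <;>
    ring_nf at h
  · omega
  · exact ⟨t, w, rfl, rfl, by linarith⟩
  · omega
  · omega

theorem exists_mul_sq_add_one_eq_mul_sq_of_pell {p q : ℕ} (hp : p.Prime) (hq : q.Prime)
    (hpq : p * q % 4 = 1) {x y : ℕ} (hxy : x ^ 2 = p * q * y ^ 2 + 1) (hy : 0 < y) :
    (∃ a b, a ^ 2 + 1 = p * q * b ^ 2) ∨ (∃ a b, p * a ^ 2 + 1 = q * b ^ 2) ∨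
      (∃ a b, q * a ^ 2 + 1 = p * b ^ 2) := by
  induction x using Nat.strong_induction_on generalizing y with
  | _ x ih =>
  obtain ⟨t, w, rfl, rfl, htw⟩ := exists_eq_two_mul_add_one_of_sq_eq_mul_sq_add_one hpq hxy
  have ht : 0 < t := Nat.pos_of_ne_zero fun h0 => by
    subst h0
    simp [hp.ne_zero, hq.ne_zero] at htw
    omega
  obtain ⟨a, b, ⟨rfl, h⟩ | ⟨rfl, h⟩ | ⟨rfl, h⟩ | ⟨rfl, h⟩⟩ :=
    (show t.Coprime (t + 1) by simp).exists_sq_of_mul_eq_prime_mul_prime_mul_sq hp hq htw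
  · exact .inl ⟨a, b, h⟩
  · exact .inr <| .inl ⟨a, b, h⟩
  · exact .inr <| .inr ⟨a, b, h⟩
  · refine ih b (by nlinarith) h.symm (Nat.pos_of_ne_zero ?_)
    rintro rfl
    simp at ht

theorem mod_four_eq_two_of_mul_sq_add_one_eq {d n a b : ℕ} (hd : d % 4 = 1) (hn : n % 8 = 5)
    (h : d * a ^ 2 + 1 = n * b ^ 2) : a % 4 = 2 := by
  have key : ∀ d a b : ZMod 8, (d = 1 ∨ d = 5) → d * a ^ 2 + 1 = 5 * b ^ 2 → a = 2 ∨ a = 6 := by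
    decide
  have h8 := congrArg (Nat.cast : ℕ → ZMod 8) h
  push_cast at h8
  rw [← ZMod.natCast_mod n, hn] at h8
  have hd8 : (d : ZMod 8) = 1 ∨ (d : ZMod 8) = 5 := by
    rw [← ZMod.natCast_mod]
    rcases (by omega : d % 8 = 1 ∨ d % 8 = 5) with h | h <;> rw [h] <;> simp
  have ha8 : a % 8 = 2 ∨ a % 8 = 6 := by
    rw [← ZMod.val_natCast]
    rcases key _ _ _ hd8 h8 with ha | ha <;> rw [ha] <;> decide
  omega

end Nat

namespace jacobiSym

theorem eq_one_of_mul_sq_eq_one {a m : ℕ} {b : ZMod m} (h : (a : ZMod m) * b ^ 2 = 1) :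
    jacobiSym a m = 1 := by
  have hcop : Int.gcd a m = 1 := by
    rw [Int.gcd_natCast_natCast]
    exact (ZMod.isUnit_iff_coprime a m).mp (IsUnit.of_mul_eq_one _ h)
  refine (eq_one_or_neg_one hcop).resolve_right fun hneg =>
    ZMod.nonsquare_of_jacobiSym_eq_neg_one hneg ⟨a * b, ?_⟩
  push_cast
  linear_combination (-(a : ZMod m)) * h

theorem eq_one_of_mul_sq_add_one_eq {d n a b : ℕ} (hd : d % 4 = 1) (hn : Odd n)
    (h : d * a ^ 2 + 1 = n * b ^ 2) : jacobiSym d n = 1 := by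
  rw [quadratic_reciprocity_one_mod_four hd hn]
  refine eq_one_of_mul_sq_eq_one (b := (b : ZMod d)) ?_
  have := congrArg (Nat.cast : ℕ → ZMod d) h
  push_cast [ZMod.natCast_self] at this
  linear_combination -this

theorem eq_one_of_dvd_of_mul_sq_add_one_eq {d n a b m : ℕ} (hn : n % 4 = 1) (hm : Odd m)
    (hma : m ∣ a) (h : d * a ^ 2 + 1 = n * b ^ 2) : jacobiSym m n = 1 := by
  obtain ⟨c, rfl⟩ := hma
  rw [← quadratic_reciprocity_one_mod_four hn hm]
  refine eq_one_of_mul_sq_eq_one (b := (b : ZMod m)) ?_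
  have := congrArg (Nat.cast : ℕ → ZMod m) h
  push_cast [ZMod.natCast_self] at this
  linear_combination -this

end jacobiSym

theorem ZMod.pow_div_four_ne_neg_one_of_mul_sq_add_one_eq {d n a b : ℕ} [Fact n.Prime]
    (hd : d % 4 = 1) (hn : n % 4 = 1) (h : d * a ^ 2 + 1 = n * b ^ 2) :
    (d : ZMod n) ^ ((n - 1) / 4) ≠ -1 := by
  intro hq
  set k := (n - 1) / 4
  have hn5 : 5 ≤ n := by have := (Fact.out : n.Prime).two_le; omega
  have : Fact (2 < n) := ⟨by omega⟩
  have hnodd : Odd n := Nat.odd_iff.mpr (by omega)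
  have hmod : (d : ZMod n) * a ^ 2 = -1 := by
    have := congrArg (Nat.cast : ℕ → ZMod n) h
    push_cast [ZMod.natCast_self] at this
    linear_combination this
  have heuler : ((jacobiSym a n : ℤ) : ZMod n) = -(-1) ^ k := by
    rw [← jacobiSym.legendreSym.to_jacobiSym, legendreSym.eq_pow, show n / 2 = 2 * k by omega,
      pow_mul]
    have := congrArg (· ^ k) hmod
    simp only [mul_pow, hq] at this
    push_cast
    linear_combination -this
  have hodd : ∀ m, Odd m → m ∣ a → jacobiSym m n = 1 := fun m hm hma =>
    jacobiSym.eq_one_of_dvd_of_mul_sq_add_one_eq hn hm hma h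
  rcases (by omega : n % 8 = 1 ∨ n % 8 = 5) with h8 | h8
  · have ha0 : a ≠ 0 := by
      rintro rfl
      simp at hmod
    obtain ⟨e, m, hm, rfl⟩ := Nat.exists_eq_two_pow_mul_odd ha0
    have hJ : jacobiSym (2 ^ e * m : ℕ) n = 1 := by
      push_cast
      rw [jacobiSym.mul_left, jacobiSym.pow_left, jacobiSym.at_two hnodd, ZMod.χ₈_nat_mod_eight, h8,
        hodd m hm (dvd_mul_left _ _)]
      simp
    rw [hJ, (show Even k from ⟨k / 2, by omega⟩).neg_one_pow] at heuler
    push_cast at heuler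
    exact ZMod.neg_one_ne_one heuler.symm
  · have ha4 := Nat.mod_four_eq_two_of_mul_sq_add_one_eq hd h8 h
    obtain ⟨m, rfl⟩ : 2 ∣ a := by omega
    have hJ : jacobiSym (2 * m : ℕ) n = -1 := by
      push_cast
      rw [jacobiSym.mul_left, jacobiSym.at_two hnodd, ZMod.χ₈_nat_mod_eight, h8,
        hodd m (Nat.odd_iff.mpr (by omega)) (dvd_mul_left _ _)]
      decide
    rw [hJ, (show Odd k from ⟨k / 2, by omega⟩).neg_one_pow] at heuler
    push_cast at heuler
    exact ZMod.neg_one_ne_one (by rwa [neg_neg] at heuler)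

theorem NumberField.RingOfIntegers.exists_sq_eq_neg_natCast {F : Type*} [Field F] {d : ℕ} {s : F}
    (hs : s ^ 2 = -(d : F)) : ∃ S : 𝓞 F, S ^ 2 = -(d : 𝓞 F) := by
  have hint : IsIntegral ℤ s := IsIntegral.of_pow two_pos (hs ▸ (isIntegral_natCast d).neg)
  obtain ⟨S, hS⟩ : ∃ S : 𝓞 F, (S : F) = s := ⟨⟨s, hint⟩, rfl⟩
  exact ⟨S, RingOfIntegers.ext <| by push_cast [hS, hs]; rfl⟩

theorem exists_neg_one_eq_sq_add_mul_sq {R : Type*} [CommRing R] {d n : ℕ} {S : R}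
    (hS : S ^ 2 = -(d : R))
    (h : (∃ a b : ℕ, a ^ 2 + 1 = d * n * b ^ 2) ∨ ∃ a b : ℕ, n * a ^ 2 + 1 = d * b ^ 2) :
    ∃ α β : R, -1 = α ^ 2 + n * β ^ 2 := by
  rcases h with ⟨a, b, h⟩ | ⟨a, b, h⟩ <;> have h' := congrArg (Nat.cast : ℕ → R) h <;>
    push_cast at h'
  · exact ⟨a, b * S, by linear_combination -h' - (n * b ^ 2 : R) * hS⟩
  · exact ⟨b * S, a, by linear_combination -h' - (b ^ 2 : R) * hS⟩

theorem neg_one_sum_of_squares_of_symbols_general {F : Type*} [Field F]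
    (d n : ℕ) (hd : d.Prime) (hn : n.Prime) (hdn : d ≠ n)
    (hd1 : d % 4 = 1) (hn1 : n % 4 = 1)
    (s : F) (hs : s ^ 2 = -(d : F))
    (hsym : (@legendreSym n ⟨hn⟩ (d : ℤ) = -1) ∨ ((d : ZMod n) ^ ((n - 1) / 4) = -1)) :
    ∃ α β : 𝓞 F, (-1 : 𝓞 F) = α ^ 2 + (n : 𝓞 F) * β ^ 2 := by
  have : Fact n.Prime := ⟨hn⟩
  obtain ⟨S, hS⟩ := RingOfIntegers.exists_sq_eq_neg_natCast hs
  obtain ⟨x, y, hxy, hy⟩ := Nat.exists_sq_eq_mul_sq_add_one_of_not_isSquare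
    (Nat.mul_pos hd.pos hn.pos) (hd.not_isSquare_mul hn hdn)
  rcases Nat.exists_mul_sq_add_one_eq_mul_sq_of_pell hd hn (by simp [Nat.mul_mod, hd1, hn1]) hxy hy
    with h | ⟨a, b, h⟩ | h
  · exact exists_neg_one_eq_sq_add_mul_sq hS (.inl h)
  · rcases hsym with hleg | hquart
    · rw [jacobiSym.legendreSym.to_jacobiSym,
        jacobiSym.eq_one_of_mul_sq_add_one_eq hd1 (hn.odd_of_ne_two (by omega)) h] at hleg
      exact absurd hleg (by decide)
    · exact absurd hquart (ZMod.pow_div_four_ne_neg_one_of_mul_sq_add_one_eq hd1 hn1 h)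
  · exact exists_neg_one_eq_sq_add_mul_sq hS (.inr h)

/-- Let `d ≥ 5` and `n` be two distinct rational primes, both `≡ 1 mod 4`,
and `F = ℚ(√-d)`.  If the Legendre symbol `(d/n) = -1`, or the quartic residue symbol
`(d/n)₄ = -1` (i.e. `d^((n-1)/4) ≡ -1 mod n`), then `-1 = α² + nβ²` for some
`α, β ∈ O_F`. -/
theorem neg_one_sum_of_squares_of_symbols {F : Type*} [Field F] [NumberField F]
    (d n : ℕ) (hd : d.Prime) (hn : n.Prime) (hd5 : 5 ≤ d) (hdn : d ≠ n)
    (hd1 : d % 4 = 1) (hn1 : n % 4 = 1)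
    (s : F) (hs : s ^ 2 = -(d : F)) (hgen : Algebra.adjoin ℚ {s} = ⊤)
    (hsym : (@legendreSym n ⟨hn⟩ (d : ℤ) = -1) ∨ ((d : ZMod n) ^ ((n - 1) / 4) = -1)) :
    ∃ α β : 𝓞 F, (-1 : 𝓞 F) = α ^ 2 + (n : 𝓞 F) * β ^ 2 :=
  neg_one_sum_of_squares_of_symbols_general d n hd hn hdn hd1 hn1 s hs hsym
end

section
/- Let d > 3 and n be positive squarefree coprime integers with d ≡ 3 (mod 4) and n ≡ 1 or 2 (mod 4). Set F = Q(√−d) and E = F(√−n). Then {1, (1+√−d)/2, √−n, ((1+√−d)/2)·√−n} is an integral basis of O_E; equivalently, O_E = O_F + O_F·√−n. -/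
open NumberField Polynomial

/-!
Write `x ∈ E` as `α + β t` with `α, β ∈ F`. If `x` is integral, so is its conjugate `α - β t`,
hence so are the trace `2α` and the norm `α² + nβ²`, which lie in `F`. Then
`n (2β)² = 4 (α² + nβ²) - (2α)²` is integral, and as `n` is squarefree and prime to `d` this
forces `2β ∈ 𝓞 F`. So `A = 2α` and `B = 2β` lie in `𝓞 F` and `4 ∣ A² + n B²`. Since
`d ≡ 3 (mod 4)`, the prime `2` is unramified in `F`: `2 ∣ y²` implies `2 ∣ y` in `𝓞 F`.
Together with `n ≡ 1, 2 (mod 4)` this gives `2 ∣ A` and `2 ∣ B`, i.e. `α, β ∈ 𝓞 F`.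
-/

theorem Rat.exists_int_eq_of_squarefree_mul_sq {m : ℕ} (hm : Squarefree m) {q : ℚ} {z : ℤ}
    (h : m * q ^ 2 = z) : ∃ w : ℤ, q = w := by
  have hsq : (m * q) ^ 2 = algebraMap ℤ ℚ (m * z) := by push_cast; linear_combination m * h
  obtain ⟨w, hw⟩ := IsIntegrallyClosed.isIntegral_iff.1
    (IsIntegral.of_pow two_pos (hsq ▸ isIntegral_algebraMap))
  rw [algebraMap_int_eq, eq_intCast] at hw
  have hw2 : w ^ 2 = m * z := by
    exact_mod_cast (show (w : ℚ) ^ 2 = m * z by rw [hw, ← h]; ring)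
  obtain ⟨k, rfl⟩ := ((Int.squarefree_natCast.2 hm).dvd_pow_iff_dvd two_ne_zero).1 ⟨z, hw2⟩
  refine ⟨k, mul_left_cancel₀ (Nat.cast_ne_zero.2 hm.ne_zero) ?_⟩
  push_cast at hw
  exact hw.symm

theorem Int.four_dvd_sq_add_mul_sq_of_four_dvd_mul {d n a b : ℤ} (hd : d % 4 = 3) (hn : ¬ 4 ∣ n)
    (h : 4 ∣ n * (a ^ 2 + d * b ^ 2)) : 4 ∣ a ^ 2 + d * b ^ 2 := by
  have key : ∀ n a b : ZMod 4, n ≠ 0 → n * (a ^ 2 + 3 * b ^ 2) = 0 → a ^ 2 + 3 * b ^ 2 = 0 := by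
    decide
  have hd' : (d : ZMod 4) = 3 := by rw [← ZMod.intCast_mod, Nat.cast_ofNat, hd]; rfl
  have hdvd : ∀ z : ℤ, 4 ∣ z ↔ (z : ZMod 4) = 0 :=
    fun z => (ZMod.intCast_zmod_eq_zero_iff_dvd z 4).symm
  rw [hdvd] at hn h ⊢
  push_cast [hd'] at hn h ⊢
  exact key _ _ _ hn h

theorem two_dvd_and_two_dvd_of_four_dvd_sq_add_mul_sq {R : Type*} [CommRing R] [IsDomain R]
    [CharZero R] (h2 : ∀ y : R, 2 ∣ y ^ 2 → 2 ∣ y) {n : ℕ} (hn : n % 4 = 1 ∨ n % 4 = 2)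
    {A B : R} (h : 4 ∣ A ^ 2 + n * B ^ 2) : 2 ∣ A ∧ 2 ∣ B := by
  have h4 : (2 : R) ∣ 4 := ⟨2, by norm_num⟩
  have hodd : ∀ (k : ℕ) (w : R), 4 ∣ 2 * (2 * k + 1) * w → 2 ∣ w := by
    rintro k w ⟨z, hz⟩
    have : (2 * k + 1) * w = 2 * z := mul_left_cancel₀ two_ne_zero (by linear_combination hz)
    exact ⟨z - k * w, by linear_combination this⟩
  obtain ⟨k, hk⟩ : ∃ k : ℕ, n = 4 * k + n % 4 := ⟨n / 4, (Nat.div_add_mod n 4).symm⟩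
  rcases hn with hn | hn <;> rw [hn] at hk <;> subst hk <;> push_cast at h
  · obtain ⟨C, hC⟩ := h2 (A + B) <| by
      have : (A + B) ^ 2 = A ^ 2 + (4 * k + 1) * B ^ 2 + 2 * (A * B - 2 * k * B ^ 2) := by ring
      exact this ▸ dvd_add (h4.trans h) (dvd_mul_right _ _)
    have hA : 2 ∣ A := h2 A <| hodd k _ <| by
      have : 2 * (2 * k + 1) * A ^ 2 = A ^ 2 + (4 * k + 1) * B ^ 2
          - 4 * ((4 * k + 1) * (C ^ 2 - A * C)) := by
        rw [show B = 2 * C - A by linear_combination hC]; ring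
      exact this ▸ dvd_sub h (dvd_mul_right _ _)
    rw [show B = 2 * C - A by linear_combination hC]
    exact ⟨hA, dvd_sub (dvd_mul_right _ _) hA⟩
  · obtain ⟨A', rfl⟩ := h2 A <| by
      have : A ^ 2 = A ^ 2 + (4 * k + 2) * B ^ 2 - 2 * ((2 * k + 1) * B ^ 2) := by ring
      exact this ▸ dvd_sub (h4.trans h) (dvd_mul_right _ _)
    refine ⟨dvd_mul_right _ _, h2 B <| hodd k _ ?_⟩
    have : 2 * (2 * k + 1) * B ^ 2 = (2 * A') ^ 2 + (4 * k + 2) * B ^ 2 - 4 * A' ^ 2 := by ring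
    exact this ▸ dvd_sub h (dvd_mul_right _ _)

theorem exists_eq_algebraMap_add_algebraMap_mul {K L : Type*} [CommRing K] [CommRing L]
    [Algebra K L] {x : L} {c : K} (hx : x ^ 2 = algebraMap K L c)
    (hgen : Algebra.adjoin K {x} = ⊤) (y : L) :
    ∃ a b : K, y = algebraMap K L a + algebraMap K L b * x := by
  have hy : y ∈ Algebra.adjoin K {x} := hgen ▸ Algebra.mem_top
  induction hy using Algebra.adjoin_induction with
  | mem y hy => exact ⟨0, 1, by simp [Set.mem_singleton_iff.1 hy]⟩
  | algebraMap a => exact ⟨a, 0, by simp⟩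
  | add y z _ _ hy hz =>
    obtain ⟨a, b, rfl⟩ := hy
    obtain ⟨a', b', rfl⟩ := hz
    exact ⟨a + a', b + b', by simp only [map_add]; ring⟩
  | mul y z _ _ hy hz =>
    obtain ⟨a, b, rfl⟩ := hy
    obtain ⟨a', b', rfl⟩ := hz
    refine ⟨a * a' + b * b' * c, a * b' + b * a', ?_⟩
    simp only [map_add, map_mul]
    linear_combination algebraMap K L b * algebraMap K L b' * hx

section QuadraticExtension

variable {K L : Type*} [Field K] [Field L] [Algebra K L] {x : L} {c : K}

theorem exists_algHom_apply_eq_neg (hx : x ^ 2 = algebraMap K L c) (hc : ∀ b : K, b ^ 2 ≠ c)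
    (hgen : Algebra.adjoin K {x} = ⊤) : ∃ σ : L →ₐ[K] L, σ x = -x := by
  have hroot : aeval x (X ^ 2 - C c) = 0 := by simp [hx]
  have hmonic : (X ^ 2 - C c).Monic := monic_X_pow_sub_C c two_ne_zero
  have hmin : minpoly K x = X ^ 2 - C c := (minpoly.eq_of_irreducible_of_monic
    (X_pow_sub_C_irreducible_of_prime Nat.prime_two hc) hroot hmonic).symm
  obtain ⟨pb, rfl⟩ : ∃ pb : PowerBasis K L, pb.gen = x :=
    ⟨_, PowerBasis.ofAdjoinEqTop_gen ⟨_, hmonic, hroot⟩ hgen⟩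
  have hroot' : aeval (-pb.gen) (minpoly K pb.gen) = 0 := by rw [hmin]; simp [hx]
  exact ⟨pb.lift _ hroot', pb.lift_gen _ hroot'⟩

variable {σ : L →ₐ[K] L}

theorem eq_zero_and_eq_zero_of_algebraMap_add_mul_eq_zero [CharZero L] (hx : x ≠ 0)
    (hσ : σ x = -x) {a b : K} (h : algebraMap K L a + algebraMap K L b * x = 0) :
    a = 0 ∧ b = 0 := by
  have h' : algebraMap K L a - algebraMap K L b * x = 0 := by
    simpa [hσ, sub_eq_add_neg] using congrArg σ h
  have hb : b = 0 := by
    have : 2 * x * algebraMap K L b = 0 := by linear_combination h - h'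
    simpa [hx] using this
  subst hb
  simpa using h

theorem isIntegral_two_mul_and_sq_sub_mul_sq {R : Type*} [CommRing R] [Algebra R K]
    [Algebra R L] [IsScalarTower R K L] (hx : x ^ 2 = algebraMap K L c) (hσ : σ x = -x)
    {a b : K} (h : IsIntegral R (algebraMap K L a + algebraMap K L b * x)) :
    IsIntegral R (2 * a) ∧ IsIntegral R (a ^ 2 - c * b ^ 2) := by
  have hσy : σ (algebraMap K L a + algebraMap K L b * x)
      = algebraMap K L a - algebraMap K L b * x := by
    simp [hσ, sub_eq_add_neg]
  have hσint := hσy ▸ h.map (σ.restrictScalars R)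
  refine ⟨.tower_bot (algebraMap K L).injective ?_, .tower_bot (algebraMap K L).injective ?_⟩
  · have e : algebraMap K L (2 * a) = (algebraMap K L a + algebraMap K L b * x)
        + (algebraMap K L a - algebraMap K L b * x) := by
      simp only [map_mul, map_ofNat]; ring
    exact e ▸ h.add hσint
  · have e : algebraMap K L (a ^ 2 - c * b ^ 2) = (algebraMap K L a + algebraMap K L b * x)
        * (algebraMap K L a - algebraMap K L b * x) := by
      simp only [map_sub, map_mul, map_pow]
      linear_combination algebraMap K L b ^ 2 * hx
    exact e ▸ h.mul hσint

end QuadraticExtension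

theorem NumberField.RingOfIntegers.natCast_dvd_iff {K : Type*} [Field K] [NumberField K] {m : ℕ}
    (hm : m ≠ 0) (x : 𝓞 K) : (m : 𝓞 K) ∣ x ↔ IsIntegral ℤ ((x : K) / m) := by
  have hm' : (m : K) ≠ 0 := Nat.cast_ne_zero.2 hm
  constructor
  · rintro ⟨w, rfl⟩
    convert w.isIntegral_coe using 1
    rw [coe_eq_algebraMap, map_mul, map_natCast]
    field_simp
  · intro h
    obtain ⟨w, hw⟩ : ∃ w : 𝓞 K, (w : K) = x / m := ⟨⟨_, h⟩, rfl⟩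
    refine ⟨w, ext ?_⟩
    rw [coe_eq_algebraMap (_ * _), map_mul, map_natCast, ← coe_eq_algebraMap, hw]
    field_simp

section ImaginaryQuadraticField

variable {F : Type*} [Field F] [NumberField F] {d : ℕ} {s : F}

theorem exists_ratCast_add_mul (hs : s ^ 2 = -(d : F)) (hgen : Algebra.adjoin ℚ {s} = ⊤)
    (y : F) : ∃ p q : ℚ, y = p + q * s := by
  obtain ⟨p, q, hy⟩ :=
    exists_eq_algebraMap_add_algebraMap_mul (c := -(d : ℚ)) (by simp [hs]) hgen y
  exact ⟨p, q, by simpa only [eq_ratCast] using hy⟩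

theorem exists_algHom_apply_eq_neg_of_sq_eq_neg_natCast (hs : s ^ 2 = -(d : F))
    (hgen : Algebra.adjoin ℚ {s} = ⊤) (hd : 0 < d) : ∃ τ : F →ₐ[ℚ] F, τ s = -s := by
  refine exists_algHom_apply_eq_neg (c := -(d : ℚ)) (by simp [hs]) (fun b hb => ?_) hgen
  have : (0 : ℚ) < d := by exact_mod_cast hd
  nlinarith [sq_nonneg b]

theorem isIntegral_ratCast_add_mul_iff (hs : s ^ 2 = -(d : F))
    (hgen : Algebra.adjoin ℚ {s} = ⊤) (hd : 0 < d) (p q : ℚ) :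
    IsIntegral ℤ ((p : F) + q * s) ↔ (∃ P : ℤ, 2 * p = P) ∧ ∃ N : ℤ, p ^ 2 + d * q ^ 2 = N := by
  constructor
  · intro h
    obtain ⟨τ, hτ⟩ := exists_algHom_apply_eq_neg_of_sq_eq_neg_natCast hs hgen hd
    rw [← eq_ratCast (algebraMap ℚ F) p, ← eq_ratCast (algebraMap ℚ F) q] at h
    obtain ⟨htr, hnm⟩ := isIntegral_two_mul_and_sq_sub_mul_sq (c := -(d : ℚ)) (by simp [hs]) hτ h
    obtain ⟨P, hP⟩ := IsIntegrallyClosed.isIntegral_iff.1 htr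
    obtain ⟨N, hN⟩ := IsIntegrallyClosed.isIntegral_iff.1 hnm
    simp only [algebraMap_int_eq, eq_intCast] at hP hN
    exact ⟨⟨P, hP.symm⟩, N, by rw [hN]; ring⟩
  · rintro ⟨⟨P, hP⟩, N, hN⟩
    have hPF : (P : F) = 2 * p := by exact_mod_cast hP.symm
    have hNF : (N : F) = p ^ 2 + d * q ^ 2 := by exact_mod_cast hN.symm
    -- `p + q s` is a root of `X ^ 2 - P X + N`
    refine IsIntegral.of_aeval_monic (monic_X.mul (monic_X_sub_C (P : ℤ)))
      (by rw [monic_X.natDegree_mul (monic_X_sub_C _)]; simp) ?_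
    have e : aeval ((p : F) + q * s) (X * (X - C P)) = algebraMap ℤ F (-N) := by
      simp only [map_mul, map_sub, aeval_X, map_intCast, map_neg, algebraMap_int_eq,
        eq_intCast, hPF, hNF]
      linear_combination (q : F) ^ 2 * hs
    exact e ▸ isIntegral_algebraMap

theorem sq_ne_neg_natCast (hs : s ^ 2 = -(d : F)) (hgen : Algebra.adjoin ℚ {s} = ⊤)
    (hd : 1 < d) (hdsf : Squarefree d) {n : ℕ} (hn : 0 < n) (hcop : d.Coprime n) (γ : F) :
    γ ^ 2 ≠ -(n : F) := by
  intro hγ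
  obtain ⟨τ, hτ⟩ := exists_algHom_apply_eq_neg_of_sq_eq_neg_natCast hs hgen (by omega)
  have hs0 : s ≠ 0 := by
    rintro rfl
    simp at hs
    omega
  obtain ⟨u, v, rfl⟩ := exists_ratCast_add_mul hs hgen γ
  have h0 : algebraMap ℚ F (u ^ 2 - d * v ^ 2 + n) + algebraMap ℚ F (2 * u * v) * s = 0 := by
    simp only [eq_ratCast]
    push_cast
    linear_combination hγ - (v : F) ^ 2 * hs
  obtain ⟨h1, h2⟩ := eq_zero_and_eq_zero_of_algebraMap_add_mul_eq_zero hs0 hτ h0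
  rcases mul_eq_zero.1 (show u * v = 0 by linarith) with rfl | rfl
  · obtain ⟨w, rfl⟩ :=
      Rat.exists_int_eq_of_squarefree_mul_sq hdsf (z := n) (by push_cast; linarith)
    have hdn : (d : ℤ) ∣ n := ⟨w ^ 2, by exact_mod_cast (by linarith : (n : ℚ) = d * w ^ 2)⟩
    have := hcop.eq_one_of_dvd (Int.natCast_dvd_natCast.1 hdn)
    omega
  · have : (0 : ℚ) < n := by exact_mod_cast hn
    nlinarith [sq_nonneg u]

theorem isIntegral_div_two_of_isIntegral_sq_div_two (hs : s ^ 2 = -(d : F))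
    (hgen : Algebra.adjoin ℚ {s} = ⊤) (hdsf : Squarefree d) (hd4 : d % 4 = 3) {y : F}
    (hy : IsIntegral ℤ y) (hy2 : IsIntegral ℤ (y ^ 2 / 2)) : IsIntegral ℤ (y / 2) := by
  have hd : 0 < d := by omega
  obtain ⟨p, q, rfl⟩ := exists_ratCast_add_mul hs hgen y
  have e : ((p : F) + q * s) ^ 2 / 2
      = (((p ^ 2 - d * q ^ 2) / 2 : ℚ) : F) + ((p * q : ℚ) : F) * s := by
    push_cast
    linear_combination (q : F) ^ 2 / 2 * hs
  rw [isIntegral_ratCast_add_mul_iff hs hgen hd] at hy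
  rw [e, isIntegral_ratCast_add_mul_iff hs hgen hd] at hy2
  obtain ⟨⟨P, hP⟩, N, hN⟩ := hy
  obtain ⟨⟨M, hM⟩, N₂, hN₂⟩ := hy2
  -- `N₂` is the norm of `y ^ 2 / 2`, that is `N ^ 2 / 4`
  have hNN₂ : N ^ 2 = 4 * N₂ := by
    exact_mod_cast (show (N : ℚ) ^ 2 = 4 * N₂ by rw [← hN, ← hN₂]; ring)
  obtain ⟨N', rfl⟩ : 2 ∣ N := Int.prime_two.dvd_of_dvd_pow (n := 2) ⟨2 * N₂, by linarith⟩
  have hPM : P ^ 2 = 2 * (M + 2 * N') := by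
    exact_mod_cast (show (P : ℚ) ^ 2 = 2 * (M + 2 * N') by
      rw [← hP, ← hM]; push_cast at hN ⊢; linear_combination 2 * hN)
  obtain ⟨a, rfl⟩ : 2 ∣ P := Int.prime_two.dvd_of_dvd_pow ⟨_, hPM⟩
  obtain rfl : p = a := by push_cast at hP; linarith
  obtain ⟨b, rfl⟩ := Rat.exists_int_eq_of_squarefree_mul_sq hdsf (q := q) (z := 2 * N' - a ^ 2)
    (by push_cast at hN ⊢; linarith)
  obtain ⟨k, hk⟩ := Int.four_dvd_sq_add_mul_sq_of_four_dvd_mul (d := d) (n := 2) (a := a)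
    (b := b) (by omega) (by decide)
    ⟨N', by exact_mod_cast (show (2 : ℚ) * (a ^ 2 + d * b ^ 2) = 4 * N' by
      push_cast at hN; linarith)⟩
  have e' : (((a : ℚ) : F) + ((b : ℚ) : F) * s) / 2
      = ((a / 2 : ℚ) : F) + ((b / 2 : ℚ) : F) * s := by
    push_cast; ring
  rw [e', isIntegral_ratCast_add_mul_iff hs hgen hd]
  have hk' : (a : ℚ) ^ 2 + d * b ^ 2 = 4 * k := by exact_mod_cast hk
  exact ⟨⟨a, by ring⟩, k, by linear_combination hk' / 4⟩

theorem two_dvd_of_two_dvd_sq (hs : s ^ 2 = -(d : F)) (hgen : Algebra.adjoin ℚ {s} = ⊤)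
    (hdsf : Squarefree d) (hd4 : d % 4 = 3) (y : 𝓞 F) (h : 2 ∣ y ^ 2) : 2 ∣ y := by
  have h2 := RingOfIntegers.natCast_dvd_iff (K := F) two_ne_zero
  simp only [Nat.cast_ofNat] at h2
  rw [h2] at h ⊢
  rw [RingOfIntegers.coe_eq_algebraMap, map_pow] at h
  exact isIntegral_div_two_of_isIntegral_sq_div_two hs hgen hdsf hd4 y.isIntegral_coe h

theorem isIntegral_of_isIntegral_natCast_mul_sq (hs : s ^ 2 = -(d : F))
    (hgen : Algebra.adjoin ℚ {s} = ⊤) (hdsf : Squarefree d) (hd4 : d % 4 = 3) {n : ℕ}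
    (hnsf : Squarefree n) (hcop : d.Coprime n) {β : F} (h : IsIntegral ℤ (n * β ^ 2)) :
    IsIntegral ℤ β := by
  have hd : 0 < d := by omega
  obtain ⟨u, v, rfl⟩ := exists_ratCast_add_mul hs hgen β
  have e : (n : F) * (u + v * s) ^ 2
      = ((n * (u ^ 2 - d * v ^ 2) : ℚ) : F) + ((2 * n * u * v : ℚ) : F) * s := by
    push_cast
    linear_combination (n : F) * (v : F) ^ 2 * hs
  rw [e, isIntegral_ratCast_add_mul_iff hs hgen hd] at h
  obtain ⟨⟨T, hT⟩, M, hM⟩ := h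
  -- the norm of `n β ^ 2` is the square of `n (u ^ 2 + d v ^ 2)`
  obtain ⟨L, hL⟩ := Rat.exists_int_eq_of_squarefree_mul_sq squarefree_one
    (q := n * (u ^ 2 + d * v ^ 2)) (z := M) (by push_cast; linear_combination hM)
  obtain ⟨R, hR⟩ := Rat.exists_int_eq_of_squarefree_mul_sq hnsf (q := 2 * u) (z := 2 * L + T)
    (by push_cast; linear_combination 2 * hL + hT)
  obtain ⟨S, hS⟩ := Rat.exists_int_eq_of_squarefree_mul_sq
    ((Nat.squarefree_mul hcop).2 ⟨hdsf, hnsf⟩) (q := 2 * v) (z := 2 * L - T)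
    (by push_cast; linear_combination 2 * hL - hT)
  have hn4 : ¬ (4 : ℤ) ∣ n := fun h4 =>
    absurd (hnsf 2 (by exact_mod_cast h4)) (Nat.isUnit_iff.not.2 (by decide))
  obtain ⟨N, hN⟩ := Int.four_dvd_sq_add_mul_sq_of_four_dvd_mul (d := d) (n := n) (a := R)
    (b := S) (by omega) hn4
    ⟨L, by exact_mod_cast (show (n : ℚ) * ((R : ℚ) ^ 2 + d * (S : ℚ) ^ 2) = 4 * L by
      rw [← hR, ← hS]; linear_combination 4 * hL)⟩
  refine (isIntegral_ratCast_add_mul_iff hs hgen hd u v).2 ⟨⟨R, hR⟩, N, ?_⟩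
  have : (R : ℚ) ^ 2 + d * (S : ℚ) ^ 2 = 4 * N := by exact_mod_cast hN
  rw [← hR, ← hS] at this
  linear_combination this / 4

theorem isIntegral_and_isIntegral_of_isIntegral_two_mul (hs : s ^ 2 = -(d : F))
    (hgen : Algebra.adjoin ℚ {s} = ⊤) (hdsf : Squarefree d) (hd4 : d % 4 = 3) {n : ℕ}
    (hnsf : Squarefree n) (hcop : d.Coprime n) (hn4 : n % 4 = 1 ∨ n % 4 = 2) {α β : F}
    (hA : IsIntegral ℤ (2 * α)) (hN : IsIntegral ℤ (α ^ 2 + n * β ^ 2)) :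
    IsIntegral ℤ α ∧ IsIntegral ℤ β := by
  have hB : IsIntegral ℤ (2 * β) := isIntegral_of_isIntegral_natCast_mul_sq hs hgen hdsf hd4
    hnsf hcop <| by
      have e : (n : F) * (2 * β) ^ 2 = (4 : ℕ) * (α ^ 2 + n * β ^ 2) - (2 * α) ^ 2 := by
        push_cast; ring
      exact e ▸ ((isIntegral_natCast 4).mul hN).sub (hA.pow 2)
  obtain ⟨A, hA⟩ : ∃ A : 𝓞 F, (A : F) = 2 * α := ⟨⟨_, hA⟩, rfl⟩
  obtain ⟨B, hB⟩ : ∃ B : 𝓞 F, (B : F) = 2 * β := ⟨⟨_, hB⟩, rfl⟩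
  have h4 : 4 ∣ A ^ 2 + n * B ^ 2 := by
    have e : ((A ^ 2 + n * B ^ 2 : 𝓞 F) : F) / (4 : ℕ) = α ^ 2 + n * β ^ 2 := by
      simp only [RingOfIntegers.coe_eq_algebraMap, map_add, map_mul, map_pow, map_natCast]
        at hA hB ⊢
      rw [hA, hB]; push_cast; ring
    simpa using (RingOfIntegers.natCast_dvd_iff four_ne_zero _).2 (e ▸ hN)
  obtain ⟨hA2, hB2⟩ := two_dvd_and_two_dvd_of_four_dvd_sq_add_mul_sq
    (two_dvd_of_two_dvd_sq hs hgen hdsf hd4) hn4 h4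
  have h2 := RingOfIntegers.natCast_dvd_iff (K := F) two_ne_zero
  simp only [Nat.cast_ofNat] at h2
  rw [h2, hA] at hA2
  rw [h2, hB] at hB2
  simpa using And.intro hA2 hB2

end ImaginaryQuadraticField

theorem ring_of_integers_biquadratic_general {F E : Type*} [Field F] [NumberField F]
    [Field E] [Algebra F E]
    (d n : ℕ) (hdsf : Squarefree d) (hnsf : Squarefree n)
    (hcop : Nat.Coprime d n) (hd4 : d % 4 = 3) (hn4 : n % 4 = 1 ∨ n % 4 = 2)
    (sF : F) (hsF : sF ^ 2 = -(d : F)) (hgenF : Algebra.adjoin ℚ {sF} = ⊤)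
    (t : E) (ht : t ^ 2 = -(n : E)) (hgenE : Algebra.adjoin F {t} = ⊤) :
    {x : E | ∃ a b : 𝓞 F, x = algebraMap F E (a : F) + algebraMap F E (b : F) * t}
      = {x : E | IsIntegral ℤ x} := by
  have ht' : t ^ 2 = algebraMap F E (-(n : F)) := by simp [ht]
  obtain ⟨σ, hσ⟩ := exists_algHom_apply_eq_neg ht'
    (sq_ne_neg_natCast hsF hgenF (by omega) hdsf (Nat.pos_of_ne_zero hnsf.ne_zero) hcop) hgenE
  ext x
  constructor
  · rintro ⟨a, b, rfl⟩
    have htZ : t ^ 2 = algebraMap ℤ E (-n) := by simp [ht]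
    have htint : IsIntegral ℤ t := .of_pow two_pos (htZ ▸ isIntegral_algebraMap)
    exact (a.isIntegral_coe.algebraMap).add (b.isIntegral_coe.algebraMap.mul htint)
  · intro hx
    obtain ⟨α, β, rfl⟩ := exists_eq_algebraMap_add_algebraMap_mul ht' hgenE x
    obtain ⟨hA, hN⟩ := isIntegral_two_mul_and_sq_sub_mul_sq ht' hσ hx
    obtain ⟨hα, hβ⟩ := isIntegral_and_isIntegral_of_isIntegral_two_mul hsF hgenF hdsf hd4 hnsf
      hcop hn4 hA (by simpa using hN)
    exact ⟨⟨α, hα⟩, ⟨β, hβ⟩, rfl⟩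

/-- Let `d > 3` and `n` be positive squarefree coprime integers with
`d ≡ 3 (mod 4)` and `n ≡ 1` or `2 (mod 4)`, `F = ℚ(√-d)` and `E = F(√-n)`.  Then
`O_E = O_F + O_F·√-n`. -/
theorem ring_of_integers_biquadratic {F E : Type*} [Field F] [NumberField F]
    [Field E] [NumberField E] [Algebra F E]
    (d n : ℕ) (hd3 : 3 < d) (hdsf : Squarefree d) (hn0 : 0 < n) (hnsf : Squarefree n)
    (hcop : Nat.Coprime d n) (hd4 : d % 4 = 3) (hn4 : n % 4 = 1 ∨ n % 4 = 2)
    (sF : F) (hsF : sF ^ 2 = -(d : F)) (hgenF : Algebra.adjoin ℚ {sF} = ⊤)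
    (t : E) (ht : t ^ 2 = -(n : E)) (hgenE : Algebra.adjoin F {t} = ⊤) :
    {x : E | ∃ a b : 𝓞 F, x = algebraMap F E (a : F) + algebraMap F E (b : F) * t}
      = {x : E | IsIntegral ℤ x} :=
  ring_of_integers_biquadratic_general d n hdsf hnsf hcop hd4 hn4 sF hsF hgenF t ht hgenE
end

section
/- Let O be an order in a number field K with conductor f. For any α ∈ K^× such that αO ∈ J(O,f) (i.e., αO = a/b with a, b integral O-ideals coprime to f), there exist β, γ ∈ O with βO + f = O, γO + f = O, and αO = (βO)/(γO); in particular αO ∈ P(O,f). -/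
open NumberField
open scoped nonZeroDivisors

set_option maxHeartbeats 1000000
set_option synthInstance.maxHeartbeats 400000

/-- `J(O,f)`: the subgroup of invertible fractional `O`-ideals generated by the integral
ideals of `O` coprime to the conductor `f`. -/
noncomputable def JOf {K : Type*} [Field K] [NumberField K] (O : Subalgebra ℤ K) :
    Subgroup (FractionalIdeal (↥O)⁰ K)ˣ :=
  Subgroup.closure
    {u | ∃ a : Ideal O, a ⊔ condO O = ⊤ ∧ (u : FractionalIdeal (↥O)⁰ K) = a}

/-- `P(O,f)`: the subgroup generated by the principal ideals `α·O` with `α ∈ O` coprime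
to the conductor `f`. -/
noncomputable def POf {K : Type*} [Field K] [NumberField K] (O : Subalgebra ℤ K) :
    Subgroup (FractionalIdeal (↥O)⁰ K)ˣ :=
  Subgroup.closure
    {u | ∃ α : O, Ideal.span {α} ⊔ condO O = ⊤ ∧
      (u : FractionalIdeal (↥O)⁰ K) = (Ideal.span {α} : Ideal O)}

/-! Since `b + f = O`, some `γ ∈ b` satisfies `γ ≡ 1 (mod f)`. Then `β := αγ` lies in `αb = a`,
and `βO · b = a · γO` is coprime to `f`, hence so is `βO`. Thus `αO = βO · (γO)⁻¹` with both
factors in `P(O,f)`. When `f = O` this `γ` may be `0`, but then every `α = x / y` will do. -/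

namespace Ideal

variable {R : Type*} [CommRing R]

theorem exists_span_singleton_sup_eq_top_of_sup_eq_top {I f : Ideal R} (h : I ⊔ f = ⊤) :
    ∃ γ ∈ I, span {γ} ⊔ f = ⊤ := by
  obtain ⟨γ, hγ, c, hc, hγc⟩ := Submodule.mem_sup.mp (h ▸ Submodule.mem_top : (1 : R) ∈ I ⊔ f)
  refine ⟨γ, hγ, (eq_top_iff_one _).mpr ?_⟩
  exact hγc ▸ Submodule.add_mem_sup (subset_span rfl) hc

theorem sup_eq_top_of_mul_eq_mul {I J a b f : Ideal R} (h : I * J = a * b)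
    (ha : a ⊔ f = ⊤) (hb : b ⊔ f = ⊤) : I ⊔ f = ⊤ := by
  rw [← isCoprime_iff_sup_eq] at ha hb ⊢
  exact (h ▸ ha.mul_left hb : IsCoprime (I * J) f).of_mul_left_left

end Ideal

namespace FractionalIdeal

variable {R K : Type*} [CommRing R] [Field K] [Algebra R K] [IsFractionRing R K]

theorem spanSingleton_mul_coeIdeal_span_singleton {α : K} {β γ : R}
    (h : α * algebraMap R K γ = algebraMap R K β) :
    spanSingleton R⁰ α * ((Ideal.span {γ} : Ideal R) : FractionalIdeal R⁰ K)
      = (Ideal.span {β} : Ideal R) := by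
  rw [coeIdeal_span_singleton, coeIdeal_span_singleton, spanSingleton_mul_spanSingleton, h]

theorem exists_coprime_mul_algebraMap_eq_of_spanSingleton_mul_eq {f a b : Ideal R} {α : K}
    (ha : a ⊔ f = ⊤) (hb : b ⊔ f = ⊤)
    (hab : spanSingleton R⁰ α * (b : FractionalIdeal R⁰ K) = a) :
    ∃ β γ : R, γ ≠ 0 ∧ Ideal.span {β} ⊔ f = ⊤ ∧ Ideal.span {γ} ⊔ f = ⊤ ∧
      α * algebraMap R K γ = algebraMap R K β := by
  have : Nontrivial R := (IsFractionRing.nontrivial_iff_nontrivial R K).mpr inferInstance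
  by_cases hf : f = ⊤
  · obtain ⟨x, y, hy, rfl⟩ := IsFractionRing.div_surjective (A := R) α
    refine ⟨x, y, nonZeroDivisors.ne_zero hy, by simp [hf], by simp [hf], ?_⟩
    exact div_mul_cancel₀ _ (IsFractionRing.to_map_ne_zero_of_mem_nonZeroDivisors hy)
  obtain ⟨γ, hγb, hγf⟩ := Ideal.exists_span_singleton_sup_eq_top_of_sup_eq_top hb
  have hγ : γ ≠ 0 := by
    rintro rfl
    exact hf (by simpa using hγf)
  have hαγ : α * algebraMap R K γ ∈ (a : FractionalIdeal R⁰ K) :=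
    hab ▸ mul_mem_mul (mem_spanSingleton_self _ α) (mem_coeIdeal_of_mem _ hγb)
  obtain ⟨β, -, hβ⟩ := (mem_coeIdeal _).mp hαγ
  have hspan : Ideal.span {β} * b = a * Ideal.span {γ} := by
    rw [← coeIdeal_inj (K := K), coeIdeal_mul, coeIdeal_mul,
      ← spanSingleton_mul_coeIdeal_span_singleton hβ.symm, mul_right_comm, hab]
  exact ⟨β, γ, hγ, Ideal.sup_eq_top_of_mul_eq_mul hspan ha hγf, hγf, hβ.symm⟩

end FractionalIdeal

open FractionalIdeal in
theorem toPrincipalIdeal_mem_POf {K : Type*} [Field K] [NumberField K]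
    (O : Subalgebra ℤ K) [IsFractionRing ↥O K] {β : O} (hβ : algebraMap O K β ≠ 0)
    (hβf : Ideal.span {β} ⊔ condO O = ⊤) :
    toPrincipalIdeal O K (Units.mk0 _ hβ) ∈ POf O :=
  Subgroup.subset_closure ⟨β, hβf, by rw [coe_toPrincipalIdeal, coeIdeal_span_singleton]; rfl⟩

open FractionalIdeal in
theorem principal_in_jof_mem_pof_general {K : Type*} [Field K] [NumberField K]
    (O : Subalgebra ℤ K) [IsFractionRing ↥O K]
    (α : K) (hα : α ≠ 0)
    (h : ∃ a b : Ideal O, a ⊔ condO O = ⊤ ∧ b ⊔ condO O = ⊤ ∧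
      FractionalIdeal.spanSingleton (↥O)⁰ α * (b : FractionalIdeal (↥O)⁰ K)
        = (a : FractionalIdeal (↥O)⁰ K)) :
    (∃ β γ : O, Ideal.span {β} ⊔ condO O = ⊤ ∧ Ideal.span {γ} ⊔ condO O = ⊤ ∧
      FractionalIdeal.spanSingleton (↥O)⁰ α
          * ((Ideal.span {γ} : Ideal O) : FractionalIdeal (↥O)⁰ K)
        = ((Ideal.span {β} : Ideal O) : FractionalIdeal (↥O)⁰ K)) ∧
    ∃ u : (FractionalIdeal (↥O)⁰ K)ˣ,
      (u : FractionalIdeal (↥O)⁰ K) = FractionalIdeal.spanSingleton (↥O)⁰ α ∧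
      u ∈ POf O := by
  obtain ⟨a, b, haf, hbf, hab⟩ := h
  obtain ⟨β, γ, hγ, hβf, hγf, hαγ⟩ :=
    exists_coprime_mul_algebraMap_eq_of_spanSingleton_mul_eq haf hbf hab
  refine ⟨⟨β, γ, hβf, hγf, spanSingleton_mul_coeIdeal_span_singleton hαγ⟩,
    toPrincipalIdeal O K (Units.mk0 α hα), coe_toPrincipalIdeal _, ?_⟩
  have hγK : algebraMap O K γ ≠ 0 := (map_ne_zero_iff _ (IsFractionRing.injective O K)).mpr hγ
  have hβK : algebraMap O K β ≠ 0 := hαγ ▸ mul_ne_zero hα hγK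
  have hquot : Units.mk0 α hα = Units.mk0 _ hβK * (Units.mk0 _ hγK)⁻¹ := by
    ext
    simp [← hαγ]
  rw [hquot, map_mul, map_inv]
  exact mul_mem (toPrincipalIdeal_mem_POf O hβK hβf)
    (inv_mem (toPrincipalIdeal_mem_POf O hγK hγf))

/-- If `α ∈ K^×` and the principal fractional ideal `α·O` lies in
`J(O,f)` (i.e. `α·O = a/b` with `a, b` integral `O`-ideals coprime to the conductor `f`),
then there are `β, γ ∈ O` with `β·O` and `γ·O` coprime to `f` and `α·O = (β·O)/(γ·O)`;
in particular `α·O ∈ P(O,f)`. -/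
theorem principal_in_jof_mem_pof {K : Type*} [Field K] [NumberField K]
    (O : Subalgebra ℤ K) (hO : IsOrder O) [IsFractionRing ↥O K]
    (α : K) (hα : α ≠ 0)
    (h : ∃ a b : Ideal O, a ⊔ condO O = ⊤ ∧ b ⊔ condO O = ⊤ ∧
      FractionalIdeal.spanSingleton (↥O)⁰ α * (b : FractionalIdeal (↥O)⁰ K)
        = (a : FractionalIdeal (↥O)⁰ K)) :
    (∃ β γ : O, Ideal.span {β} ⊔ condO O = ⊤ ∧ Ideal.span {γ} ⊔ condO O = ⊤ ∧
      FractionalIdeal.spanSingleton (↥O)⁰ α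
          * ((Ideal.span {γ} : Ideal O) : FractionalIdeal (↥O)⁰ K)
        = ((Ideal.span {β} : Ideal O) : FractionalIdeal (↥O)⁰ K)) ∧
    ∃ u : (FractionalIdeal (↥O)⁰ K)ˣ,
      (u : FractionalIdeal (↥O)⁰ K) = FractionalIdeal.spanSingleton (↥O)⁰ α ∧
      u ∈ POf O :=
  principal_in_jof_mem_pof_general O α hα h
end
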